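/- arXiv:1509.00106 — 2 statements merged into one kernel-verified Lean document; each statement's English description precedes it below -/
import Mathlib

section
/- Run the algorithm with c̄ = 1 and with the quadratic prox-function b(u) := (1/2)‖u − ū^c‖². Then F(x^k) − F* ≤ ‖A‖²·‖x⁰ − x*‖²/(2γ₁·k) + 3γ₁·D_U/k for every k ≥ 1; in particular, if x⁰ ≠ x*, D_U > 0 and γ₁ := ‖A‖·‖x⁰ − x*‖/√(6·D_U), then F(x^k) − F* ≤ ‖x⁰ − x*‖·‖A‖·√(6·D_U)/k for every k ≥ 1. -/
/-!
The maximizer `u*_γ(z)` of the `γ`-strongly concave problem defining `φ*_γ(z)` has quadratic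
growth, which with Young's inequality gives the upper model
`φ*_γ(z') ≤ φ*_γ(z) + ⟪z' - z, u*_γ(z)⟫ + ‖z' - z‖² / (2γ)`. So `f_γ = φ*_γ ∘ Aᵀ` is
`‖A‖²/γ`-smooth with gradient `A u*_γ(Aᵀx)`, and `f_γ ≤ f ≤ f_γ + γ D_U`. Every iteration is a
proximal gradient step on `F_γ = f_γ + g` at `x̂^k`; testing its three-point inequality at
`(1 - τ_k) x^k + τ_k x*` and bounding the linear model of `f_{γ_{k+1}}` at `x̂^k` by
`f_{γ_k}(x^k)` and by `f(x*)` gives the Lyapunov decrease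
`(k+1) (F_{γ_{k+1}}(x^{k+1}) - F*) + ‖A‖²/(2γ₁) ‖x̃^{k+1} - x*‖²
  ≤ k (F_{γ_k}(x^k) - F*) + ‖A‖²/(2γ₁) ‖x̃^k - x*‖²`,
in which the schedule enters only through `(1 - τ_k)(γ_k - γ_{k+1}) = τ_k γ_{k+1}`. Telescoping and
`f ≤ f_γ + γ D_U` give the rate; the second bound is the first one at the `γ₁` balancing its terms.
-/

open scoped RealInnerProductSpace BigOperators InnerProduct
open Filter Topology

section NormedSpace

variable {E : Type*} [NormedAddCommGroup E] [NormedSpace ℝ E]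

theorem StrongConvexOn.add_sq_le_of_isMinOn {s : Set E} {m : ℝ} {f : E → ℝ}
    (hf : StrongConvexOn s m f) {x y : E} (hx : x ∈ s) (hy : y ∈ s) (hmin : IsMinOn f s x) :
    f x + m / 2 * ‖y - x‖ ^ 2 ≤ f y := by
  have hseg : ∀ t ∈ Set.Ioc (0 : ℝ) 1, f x + (1 - t) * (m / 2 * ‖y - x‖ ^ 2) ≤ f y := by
    rintro t ⟨ht0, ht1⟩
    have hmid := hf.2 hx hy (sub_nonneg.2 ht1) ht0.le (sub_add_cancel 1 t)
    have hle := isMinOn_iff.1 hmin _ (hf.1 hx hy (sub_nonneg.2 ht1) ht0.le (sub_add_cancel 1 t))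
    simp only [smul_eq_mul, norm_sub_rev x y] at hmid
    refine le_of_mul_le_mul_left ?_ ht0
    linarith
  have hlim : Tendsto (fun t : ℝ => f x + (1 - t) * (m / 2 * ‖y - x‖ ^ 2)) (𝓝[>] 0)
      (𝓝 (f x + m / 2 * ‖y - x‖ ^ 2)) :=
    tendsto_nhdsWithin_of_tendsto_nhds (by
      simpa using (Continuous.tendsto (by fun_prop) (0 : ℝ) :
        Tendsto (fun t : ℝ => f x + (1 - t) * (m / 2 * ‖y - x‖ ^ 2)) _ _))
  exact le_of_tendsto hlim (eventually_of_mem (Ioc_mem_nhdsGT one_pos) hseg)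

end NormedSpace

theorem convexOn_toReal_inter {E : Type*} [AddCommGroup E] [Module ℝ E] {φ : E → EReal}
    (hbot : ∀ v, φ v ≠ ⊥)
    (hcx : ∀ v w : E, ∀ a c : ℝ, 0 ≤ a → 0 ≤ c → a + c = 1 →
      φ (a • v + c • w) ≤ (a : EReal) * φ v + (c : EReal) * φ w)
    {S : Set E} (hS : Convex ℝ S) : ConvexOn ℝ (S ∩ {v | φ v ≠ ⊤}) fun v => (φ v).toReal := by
  have hcomb : ∀ ⦃v⦄, φ v ≠ ⊤ → ∀ ⦃w⦄, φ w ≠ ⊤ → ∀ ⦃a c : ℝ⦄, 0 ≤ a → 0 ≤ c → a + c = 1 →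
      φ (a • v + c • w) ≤ ((a * (φ v).toReal + c * (φ w).toReal : ℝ) : EReal) := by
    intro v hv w hw a c ha hc hac
    rw [EReal.coe_add, EReal.coe_mul, EReal.coe_mul, EReal.coe_toReal hv (hbot v),
      EReal.coe_toReal hw (hbot w)]
    exact hcx v w a c ha hc hac
  have hconv : Convex ℝ (S ∩ {v | φ v ≠ ⊤}) := fun v hv w hw a c ha hc hac =>
    ⟨hS hv.1 hw.1 ha hc hac, ne_top_of_le_ne_top (EReal.coe_ne_top _) (hcomb hv.2 hw.2 ha hc hac)⟩
  refine ⟨hconv, fun v hv w hw a c ha hc hac => ?_⟩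
  exact EReal.toReal_le_toReal (hcomb hv.2 hw.2 ha hc hac) (hbot _) (EReal.coe_ne_top _)

theorem isMinOn_toReal_add {α : Type*} {g : α → EReal} (hbot : ∀ y, g y ≠ ⊥) {q : α → ℝ} {m y₀ : α}
    (hy₀ : g y₀ ≠ ⊤) (hmin : ∀ y, g m + (q m : EReal) ≤ g y + (q y : EReal)) :
    g m ≠ ⊤ ∧ IsMinOn (fun y => (g y).toReal + q y) {y | g y ≠ ⊤} m := by
  have hm : g m ≠ ⊤ := fun htop => by
    have := hmin y₀
    rw [htop, EReal.top_add_coe, top_le_iff] at this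
    exact EReal.add_ne_top hy₀ (EReal.coe_ne_top _) this
  refine ⟨hm, fun y hy => ?_⟩
  have := hmin y
  rw [← EReal.coe_toReal hm (hbot m), ← EReal.coe_toReal hy (hbot y), ← EReal.coe_add,
    ← EReal.coe_add, EReal.coe_le_coe_iff] at this
  exact this

theorem EReal.toReal_add_toReal_of_add_eq_coe {a b : EReal} {s : ℝ} (ha : a ≠ ⊥) (hb : b ≠ ⊥)
    (h : a + b = s) : a ≠ ⊤ ∧ b ≠ ⊤ ∧ a.toReal + b.toReal = s := by
  obtain ⟨ha', hb'⟩ := (EReal.add_ne_top_iff_ne_top₂ ha hb).1 (h ▸ EReal.coe_ne_top s)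
  exact ⟨ha', hb', by rw [← EReal.toReal_add ha' ha hb' hb, h, EReal.toReal_coe]⟩

theorem EReal.add_sub_coe_le {a b : EReal} {p q s r : ℝ} (ha : a ≤ p) (hb : b ≤ q)
    (hr : p + q - s ≤ r) : a + b - s ≤ r := by
  calc a + b - s ≤ (p : EReal) + q - s := EReal.sub_le_sub (add_le_add ha hb) le_rfl
    _ ≤ r := by exact_mod_cast hr

section InnerProductSpace

variable {E F : Type*} [NormedAddCommGroup E] [InnerProductSpace ℝ E]
  [NormedAddCommGroup F] [InnerProductSpace ℝ F]

theorem norm_smul_add_smul_sub_sq {a b : ℝ} (hab : a + b = 1) (x y c : E) :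
    ‖a • x + b • y - c‖ ^ 2 = a * ‖x - c‖ ^ 2 + b * ‖y - c‖ ^ 2 - a * b * ‖x - y‖ ^ 2 := by
  obtain rfl := eq_sub_of_add_eq hab
  have hc : (1 - b) • x + b • y - c = (1 - b) • (x - c) + b • (y - c) := by module
  rw [hc, ← sub_sub_sub_cancel_right x y c, norm_add_sq_real, norm_sub_sq_real (x - c),
    norm_smul, norm_smul, real_inner_smul_left, real_inner_smul_right, mul_pow, mul_pow,
    Real.norm_eq_abs, Real.norm_eq_abs, sq_abs, sq_abs]
  ring

theorem ConvexOn.strongConvexOn_add_sq_norm_sub {s : Set E} {ψ : E → ℝ} (hψ : ConvexOn ℝ s ψ)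
    (m : ℝ) (c : E) : StrongConvexOn s m fun x => ψ x + m / 2 * ‖x - c‖ ^ 2 := by
  refine ⟨hψ.1, fun x hx y hy a b ha hb hab => ?_⟩
  have hψxy := hψ.2 hx hy ha hb hab
  simp only [smul_eq_mul] at hψxy ⊢
  rw [norm_smul_add_smul_sub_sq hab]
  linarith

theorem real_inner_le_mul_sq_add_sq_div {γ : ℝ} (hγ : 0 < γ) (a b : E) :
    ⟪a, b⟫ ≤ γ / 2 * ‖b‖ ^ 2 + ‖a‖ ^ 2 / (2 * γ) := by
  have hyoung : ‖a‖ * ‖b‖ ≤ γ / 2 * ‖b‖ ^ 2 + ‖a‖ ^ 2 / (2 * γ) := by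
    rw [← sub_nonneg]
    have hsq : γ / 2 * ‖b‖ ^ 2 + ‖a‖ ^ 2 / (2 * γ) - ‖a‖ * ‖b‖ = (‖a‖ - γ * ‖b‖) ^ 2 / (2 * γ) := by
      field_simp
      ring
    rw [hsq]
    positivity
  exact (real_inner_le_norm a b).trans hyoung

theorem proxGrad_three_point {S : Set F} {G : F → ℝ} (hG : ConvexOn ℝ S G) {β : ℝ} (hβ : 0 < β)
    {xh d x' y : F} (hx' : x' ∈ S)
    (hmin : IsMinOn (fun w => G w + (2 * β)⁻¹ * ‖w - (xh - β • d)‖ ^ 2) S x') (hy : y ∈ S) :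
    G x' + ⟪d, x' - xh⟫ + (2 * β)⁻¹ * ‖x' - xh‖ ^ 2 + (2 * β)⁻¹ * ‖y - x'‖ ^ 2
      ≤ G y + ⟪d, y - xh⟫ + (2 * β)⁻¹ * ‖y - xh‖ ^ 2 := by
  have hcoef : (2 * β)⁻¹ = β⁻¹ / 2 := by ring
  rw [hcoef] at hmin ⊢
  have hgrowth := (hG.strongConvexOn_add_sq_norm_sub β⁻¹ (xh - β • d)).add_sq_le_of_isMinOn
    hx' hy hmin
  have hexpand : ∀ w : F, β⁻¹ / 2 * ‖w - (xh - β • d)‖ ^ 2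
      = β⁻¹ / 2 * ‖w - xh‖ ^ 2 + ⟪d, w - xh⟫ + β / 2 * ‖d‖ ^ 2 := by
    intro w
    rw [show w - (xh - β • d) = (w - xh) + β • d by abel, norm_add_sq_real, norm_smul,
      real_inner_smul_right, real_inner_comm, mul_pow, Real.norm_eq_abs, sq_abs]
    field_simp
  simp only [hexpand] at hgrowth
  linarith

theorem proxGrad_lyapunov_step {S : Set F} {G : F → ℝ} (hG : ConvexOn ℝ S G) {β τ : ℝ}
    (hβ : 0 < β) (hτ0 : 0 < τ) (hτ1 : τ ≤ 1) {ψ : F → ℝ} {P Q : ℝ} {x xt xh x' xt' xs d : F}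
    (hxh : xh = (1 - τ) • x + τ • xt) (hxt' : xt' = xt - τ⁻¹ • (xh - x'))
    (hx : x ∈ S) (hxs : xs ∈ S) (hx' : x' ∈ S)
    (hmin : IsMinOn (fun w => G w + (2 * β)⁻¹ * ‖w - (xh - β • d)‖ ^ 2) S x')
    (hdesc : ψ x' ≤ ψ xh + ⟪d, x' - xh⟫ + (2 * β)⁻¹ * ‖x' - xh‖ ^ 2)
    (hest : ψ xh + ⟪d, (1 - τ) • x + τ • xs - xh⟫ ≤ (1 - τ) * P + τ * Q) :
    ψ x' + G x' - (Q + G xs) + (2 * β)⁻¹ * τ ^ 2 * ‖xt' - xs‖ ^ 2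
      ≤ (1 - τ) * (P + G x - (Q + G xs)) + (2 * β)⁻¹ * τ ^ 2 * ‖xt - xs‖ ^ 2 := by
  set y := (1 - τ) • x + τ • xs
  have hGy := hG.2 hx hxs (sub_nonneg.2 hτ1) hτ0.le (sub_add_cancel 1 τ)
  have hthree := proxGrad_three_point hG hβ hx' hmin (hG.1 hx hxs (sub_nonneg.2 hτ1) hτ0.le
    (sub_add_cancel 1 τ))
  have hyxh : ‖y - xh‖ ^ 2 = τ ^ 2 * ‖xt - xs‖ ^ 2 := by
    rw [show y - xh = τ • (xs - xt) by rw [hxh]; module, norm_smul, mul_pow, norm_sub_rev,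
      Real.norm_eq_abs, sq_abs]
  have hyx' : ‖y - x'‖ ^ 2 = τ ^ 2 * ‖xt' - xs‖ ^ 2 := by
    have hxt'' : τ • xt' = τ • xt - (xh - x') := by
      rw [hxt', smul_sub, smul_smul, mul_inv_cancel₀ hτ0.ne', one_smul]
    rw [show y - x' = τ • (xs - xt') by rw [smul_sub, hxt'', hxh]; module, norm_smul, mul_pow,
      norm_sub_rev, Real.norm_eq_abs, sq_abs]
  simp only [smul_eq_mul] at hGy
  rw [hyxh, hyx'] at hthree
  linarith

-- The objective maximized in `φ*_γ(z)`, with `b v = ‖v - c‖² / 2`; `φ` enters as the real function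
-- `h = (φ ·).toReal`, which is only ever used on `U ∩ dom φ`.
noncomputable def smoothObj (h : E → ℝ) (c : E) (γ : ℝ) (z v : E) : ℝ :=
  ⟪z, v⟫ - h v - γ * (1 / 2 * ‖v - c‖ ^ 2)

-- `φ*_γ(z)`, read off at a chosen maximizer `u γ z`.
noncomputable def smoothConj (h : E → ℝ) (c : E) (u : ℝ → E → E) (γ : ℝ) (z : E) : ℝ :=
  smoothObj h c γ z (u γ z)

section Smoothing

variable {D : Set E} {h : E → ℝ} {c : E} {γ : ℝ}

theorem smoothObj_add_sq_le (hh : ConvexOn ℝ D h) {z u v : E} (hu : u ∈ D)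
    (hmax : IsMaxOn (smoothObj h c γ z) D u) (hv : v ∈ D) :
    smoothObj h c γ z v + γ / 2 * ‖v - u‖ ^ 2 ≤ smoothObj h c γ z u := by
  have hψ : ConvexOn ℝ D fun v => h v - ⟪z, v⟫ :=
    hh.sub ((innerSL ℝ z : E →L[ℝ] ℝ).toLinearMap.concaveOn hh.1)
  have hneg : (fun v => -smoothObj h c γ z v) = fun v => (h v - ⟪z, v⟫) + γ / 2 * ‖v - c‖ ^ 2 := by
    ext v
    simp only [smoothObj]
    ring
  have hgrowth := (hψ.strongConvexOn_add_sq_norm_sub γ c).add_sq_le_of_isMinOn hu hv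
    (hneg ▸ hmax.neg)
  simp only [smoothObj] at hgrowth ⊢
  linarith

theorem smoothObj_le_add_inner_add_sq (hh : ConvexOn ℝ D h) (hγ : 0 < γ) {z z' u u' : E}
    (hu : u ∈ D) (hmax : IsMaxOn (smoothObj h c γ z) D u) (hu' : u' ∈ D) :
    smoothObj h c γ z' u' ≤ smoothObj h c γ z u + ⟪z' - z, u⟫ + ‖z' - z‖ ^ 2 / (2 * γ) := by
  have hgrowth := smoothObj_add_sq_le hh hu hmax hu'
  have hyoung := real_inner_le_mul_sq_add_sq_div hγ (z' - z) (u' - u)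
  have hshift : smoothObj h c γ z' u' = smoothObj h c γ z u' + ⟪z' - z, u'⟫ := by
    simp only [smoothObj, inner_sub_left]
    ring
  rw [inner_sub_right] at hyoung
  linarith

variable [CompleteSpace E] [CompleteSpace F] (A : E →L[ℝ] F)

theorem smoothObj_adjoint_le_add_inner_add_sq (hh : ConvexOn ℝ D h) (hγ : 0 < γ) {x x' : F}
    {u u' : E} (hu : u ∈ D) (hmax : IsMaxOn (smoothObj h c γ ((A†) x)) D u) (hu' : u' ∈ D) :
    smoothObj h c γ ((A†) x') u'
      ≤ smoothObj h c γ ((A†) x) u + ⟪A u, x' - x⟫ + ‖A‖ ^ 2 / (2 * γ) * ‖x' - x‖ ^ 2 := by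
  have hdesc := smoothObj_le_add_inner_add_sq (z' := (A†) x') hh hγ hu hmax hu'
  have hnorm : ‖(A†) (x' - x)‖ ^ 2 ≤ ‖A‖ ^ 2 * ‖x' - x‖ ^ 2 := by
    rw [← mul_pow]
    gcongr
    simpa using (A†).le_opNorm (x' - x)
  rw [← map_sub, ContinuousLinearMap.adjoint_inner_left, real_inner_comm] at hdesc
  refine hdesc.trans ?_
  rw [div_mul_eq_mul_div]
  gcongr

theorem smoothObj_adjoint_add_inner_le {γ' τ : ℝ} (hτ0 : 0 ≤ τ) (hτ1 : τ ≤ 1)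
    (hγ : (1 - τ) * (γ - γ') ≤ τ * γ') {x xh xs : F} {u u' : E}
    (hmax : IsMaxOn (smoothObj h c γ ((A†) x)) D u) (hu' : u' ∈ D) {Q : ℝ}
    (hQ : ∀ v ∈ D, ⟪(A†) xs, v⟫ - h v ≤ Q) :
    smoothObj h c γ' ((A†) xh) u' + ⟪A u', (1 - τ) • x + τ • xs - xh⟫
      ≤ (1 - τ) * smoothObj h c γ ((A†) x) u + τ * Q := by
  have hcompare := mul_le_mul_of_nonneg_left (isMaxOn_iff.1 hmax u' hu') (sub_nonneg.2 hτ1)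
  have hconj := mul_le_mul_of_nonneg_left (hQ u' hu') hτ0
  have hweight := mul_le_mul_of_nonneg_right hγ (by positivity : 0 ≤ 1 / 2 * ‖u' - c‖ ^ 2)
  have hinner : ⟪A u', (1 - τ) • x + τ • xs - xh⟫
      = (1 - τ) * ⟪(A†) x, u'⟫ + τ * ⟪(A†) xs, u'⟫ - ⟪(A†) xh, u'⟫ := by
    simp only [ContinuousLinearMap.adjoint_inner_left, inner_sub_right, inner_add_right,
      real_inner_smul_right, real_inner_comm (A u')]
  simp only [smoothObj] at hcompare ⊢
  rw [hinner]
  linarith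

end Smoothing

section SmoothedProxGrad

variable [CompleteSpace E] [CompleteSpace F] {D : Set E} {h : E → ℝ} {c : E} {u : ℝ → E → E}
  {S : Set F} {G : F → ℝ} (A : E →L[ℝ] F)

theorem smoothedProxGrad_step (hh : ConvexOn ℝ D h)
    (hu : ∀ γ > 0, ∀ z, u γ z ∈ D ∧ IsMaxOn (smoothObj h c γ z) D (u γ z))
    (hG : ConvexOn ℝ S G) (hA : 0 < ‖A‖) {γ1 γ γ' τ : ℝ} {k : ℕ} (hγ1 : 0 < γ1) (hγ : 0 < γ)
    (hτ : τ = 1 / ((k : ℝ) + 1)) (hγ' : γ' = γ1 / ((k : ℝ) + 1))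
    (hγγ' : (1 - τ) * (γ - γ') ≤ τ * γ') {x xt xh x' xt' xs : F} (hxh : xh = (1 - τ) • x + τ • xt)
    (hxt' : xt' = xt - τ⁻¹ • (xh - x')) (hx : x ∈ S) (hxs : xs ∈ S) (hx' : x' ∈ S)
    (hmin : IsMinOn (fun w => G w + (2 * (γ' / ‖A‖ ^ 2))⁻¹
      * ‖w - (xh - (γ' / ‖A‖ ^ 2) • A (u γ' ((A†) xh)))‖ ^ 2) S x')
    {Q : ℝ} (hQ : ∀ v ∈ D, ⟪(A†) xs, v⟫ - h v ≤ Q) :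
    ((k : ℝ) + 1) * (smoothConj h c u γ' ((A†) x') + G x' - (Q + G xs))
        + ‖A‖ ^ 2 / (2 * γ1) * ‖xt' - xs‖ ^ 2
      ≤ k * (smoothConj h c u γ ((A†) x) + G x - (Q + G xs))
        + ‖A‖ ^ 2 / (2 * γ1) * ‖xt - xs‖ ^ 2 := by
  have hk : (0 : ℝ) < k + 1 := by positivity
  have hτ0 : 0 < τ := by rw [hτ]; positivity
  have hτ1 : τ ≤ 1 := by rw [hτ, div_le_one hk]; simp
  have hγ'0 : 0 < γ' := by rw [hγ']; positivity
  have hβ : (2 * (γ' / ‖A‖ ^ 2))⁻¹ = ‖A‖ ^ 2 / (2 * γ') := by field_simp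
  obtain ⟨hxhmem, hxhmax⟩ := hu γ' hγ'0 ((A†) xh)
  have hone := proxGrad_lyapunov_step (ψ := fun y => smoothConj h c u γ' ((A†) y))
    (P := smoothConj h c u γ ((A†) x)) hG (by positivity) hτ0 hτ1 hxh hxt' hx hxs hx' hmin
    (hβ ▸ smoothObj_adjoint_le_add_inner_add_sq A hh hγ'0 hxhmem hxhmax (hu γ' hγ'0 _).1)
    (smoothObj_adjoint_add_inner_le A hτ0.le hτ1 hγγ' (hu γ hγ _).2 hxhmem hQ)
  have hcoef1 : ((k : ℝ) + 1) * (1 - τ) = k := by rw [hτ]; field_simp; ring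
  have hcoef2 : ((k : ℝ) + 1) * ((2 * (γ' / ‖A‖ ^ 2))⁻¹ * τ ^ 2) = ‖A‖ ^ 2 / (2 * γ1) := by
    rw [hβ, hτ, hγ']; field_simp
  linear_combination mul_le_mul_of_nonneg_left hone hk.le
    + (‖xt - xs‖ ^ 2 - ‖xt' - xs‖ ^ 2) * hcoef2
    + (smoothConj h c u γ ((A†) x) + G x - (Q + G xs)) * hcoef1

theorem smoothedProxGrad_rate (hh : ConvexOn ℝ D h)
    (hu : ∀ γ > 0, ∀ z, u γ z ∈ D ∧ IsMaxOn (smoothObj h c γ z) D (u γ z))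
    (hG : ConvexOn ℝ S G) {prox : ℝ → F → F}
    (hprox : ∀ β > 0, ∀ y, prox β y ∈ S
      ∧ IsMinOn (fun w => G w + (2 * β)⁻¹ * ‖w - y‖ ^ 2) S (prox β y))
    (hA : 0 < ‖A‖) {γ1 : ℝ} (hγ1 : 0 < γ1) {τ γs : ℕ → ℝ} (hτ : ∀ k : ℕ, τ k = 1 / ((k : ℝ) + 1))
    (hγs : ∀ k : ℕ, γs (k + 1) = γ1 / ((k : ℝ) + 1)) {x xt xh : ℕ → F} (hxt0 : xt 0 = x 0)
    (hx0 : x 0 ∈ S) (hxh : ∀ k, xh k = (1 - τ k) • x k + τ k • xt k)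
    (hxrec : ∀ k, x (k + 1) = prox (γs (k + 1) / ‖A‖ ^ 2)
      (xh k - (γs (k + 1) / ‖A‖ ^ 2) • A (u (γs (k + 1)) ((A†) (xh k)))))
    (hxtrec : ∀ k, xt (k + 1) = xt k - (τ k)⁻¹ • (xh k - x (k + 1)))
    {xs : F} (hxs : xs ∈ S) {Q : ℝ} (hQ : ∀ v ∈ D, ⟪(A†) xs, v⟫ - h v ≤ Q) (k : ℕ) :
    smoothConj h c u (γs (k + 1)) ((A†) (x (k + 1))) + G (x (k + 1)) - (Q + G xs)
      ≤ ‖A‖ ^ 2 * ‖x 0 - xs‖ ^ 2 / (2 * γ1 * ((k : ℝ) + 1)) := by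
  have hγpos : ∀ k, 0 < γs (k + 1) := fun k => by rw [hγs]; positivity
  have hxprox : ∀ k, x (k + 1) ∈ S ∧ IsMinOn _ S (x (k + 1)) := fun k =>
    hxrec k ▸ hprox _ (div_pos (hγpos k) (by positivity)) _
  have hxS : ∀ k, x k ∈ S
    | 0 => hx0
    | k + 1 => (hxprox k).1
  have hstep := fun k (γ : ℝ) (hγ : 0 < γ) hγγ' =>
    smoothedProxGrad_step A hh hu hG hA hγ1 hγ (hτ k) (hγs k) hγγ' (hxh k) (hxtrec k) (hxS k)
      hxs (hxS (k + 1)) (hxprox k).2 hQ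
  have hlyap : ∀ k : ℕ, ((k : ℝ) + 1) * (smoothConj h c u (γs (k + 1)) ((A†) (x (k + 1)))
      + G (x (k + 1)) - (Q + G xs)) + ‖A‖ ^ 2 / (2 * γ1) * ‖xt (k + 1) - xs‖ ^ 2
      ≤ ‖A‖ ^ 2 / (2 * γ1) * ‖x 0 - xs‖ ^ 2 := by
    intro k
    induction k with
    | zero =>
      -- at `k = 0` the weight `1 - τ 0` vanishes, so any positive level serves for `x 0`
      simpa [hxt0] using hstep 0 (γs 1) (hγpos 0) (by simp [hτ, (hγpos 0).le])
    | succ k ih =>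
      refine (hstep (k + 1) (γs (k + 1)) (hγpos k) (le_of_eq ?_)).trans ?_
      · rw [hτ, hγs, hγs]; push_cast; field_simp; ring
      · push_cast; linarith
  have hk : (0 : ℝ) < k + 1 := by positivity
  have hdist : 0 ≤ ‖A‖ ^ 2 / (2 * γ1) * ‖xt (k + 1) - xs‖ ^ 2 := by positivity
  calc _ ≤ ‖A‖ ^ 2 / (2 * γ1) * ‖x 0 - xs‖ ^ 2 / (k + 1) := by
        rw [le_div_iff₀ hk]; linarith [hlyap k]
    _ = _ := by field_simp

end SmoothedProxGrad

theorem coe_smoothObj_toReal {φ : E → EReal} {v : E} (hv : φ v ≠ ⊤) (hv' : φ v ≠ ⊥) (c : E)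
    (γ : ℝ) (z : E) :
    ((smoothObj (fun v => (φ v).toReal) c γ z v : ℝ) : EReal)
      = (⟪z, v⟫ : EReal) - φ v - ((γ * (1 / 2 * ‖v - c‖ ^ 2) : ℝ) : EReal) := by
  rw [smoothObj, EReal.coe_sub, EReal.coe_sub, EReal.coe_toReal hv hv']

theorem isMaxOn_smoothObj_toReal {U : Set E} {φ : E → EReal} (hbot : ∀ v, φ v ≠ ⊥) {c z u : E}
    {γ : ℝ} (hu : φ u ≠ ⊤)
    (hmax : ∀ v ∈ U, (⟪z, v⟫ : EReal) - φ v - ((γ * (1 / 2 * ‖v - c‖ ^ 2) : ℝ) : EReal)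
      ≤ (⟪z, u⟫ : EReal) - φ u - ((γ * (1 / 2 * ‖u - c‖ ^ 2) : ℝ) : EReal)) :
    IsMaxOn (smoothObj (fun v => (φ v).toReal) c γ z) (U ∩ {v | φ v ≠ ⊤}) u := by
  refine isMaxOn_iff.2 fun v hv => ?_
  rw [← EReal.coe_le_coe_iff, coe_smoothObj_toReal hv.2 (hbot v),
    coe_smoothObj_toReal hu (hbot u)]
  exact hmax v hv.1

theorem coe_le_iSup_inner_sub {U : Set E} {φ : E → EReal} {v : E} (hvU : v ∈ U) (hv : φ v ≠ ⊤)
    (hv' : φ v ≠ ⊥) (z : E) :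
    ((⟪z, v⟫ - (φ v).toReal : ℝ) : EReal) ≤ ⨆ w ∈ U, ((⟪z, w⟫ : EReal) - φ w) := by
  rw [EReal.coe_sub, EReal.coe_toReal hv hv']
  exact le_iSup₂_of_le v hvU le_rfl

theorem iSup_inner_sub_le_smoothObj {U : Set E} {φ : E → EReal} (hbot : ∀ v, φ v ≠ ⊥)
    {c z u : E} {γ DU : ℝ} (hγ : 0 ≤ γ) (hDU : ∀ v ∈ U ∩ {v | φ v ≠ ⊤}, 1 / 2 * ‖v - c‖ ^ 2 ≤ DU)
    (hmax : IsMaxOn (smoothObj (fun v => (φ v).toReal) c γ z) (U ∩ {v | φ v ≠ ⊤}) u) :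
    ⨆ w ∈ U, ((⟪z, w⟫ : EReal) - φ w)
      ≤ ((smoothObj (fun v => (φ v).toReal) c γ z u + γ * DU : ℝ) : EReal) := by
  refine iSup₂_le fun v hvU => ?_
  by_cases hv : φ v = ⊤
  · simp [hv]
  · have hle := isMaxOn_iff.1 hmax v ⟨hvU, hv⟩
    have hb := mul_le_mul_of_nonneg_left (hDU v ⟨hvU, hv⟩) hγ
    rw [← EReal.coe_toReal hv (hbot v), ← EReal.coe_sub, EReal.coe_le_coe_iff]
    simp only [smoothObj] at hle ⊢
    linarith

end InnerProductSpace

theorem sq_div_add_three_mul_div_of_eq_div_sqrt {a r D γ k : ℝ} (ha : 0 < a) (hr : 0 < r)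
    (hD : 0 < D) (hγ : γ = a * r / √(6 * D)) :
    a ^ 2 * r ^ 2 / (2 * γ * k) + 3 * γ * D / k = r * a * √(6 * D) / k := by
  have hs : 0 < √(6 * D) := Real.sqrt_pos.2 (by positivity)
  have hs2 : √(6 * D) ^ 2 = 6 * D := Real.sq_sqrt (by positivity)
  rcases eq_or_ne k 0 with rfl | hk
  · simp
  subst hγ
  field_simp
  linear_combination -hs2

theorem stmt_16_general
    {n : ℕ}
    (U : Set (EuclideanSpace ℝ (Fin n)))
    (hUcx : Convex ℝ U)
    (φ : EuclideanSpace ℝ (Fin n) → EReal)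
    (hφbot : ∀ v, φ v ≠ ⊥)
    (hφcx : ∀ v w : EuclideanSpace ℝ (Fin n), ∀ a c : ℝ, 0 ≤ a → 0 ≤ c → a + c = 1 →
      φ (a • v + c • w) ≤ (a : EReal) * φ v + (c : EReal) * φ w)
    (uc : EuclideanSpace ℝ (Fin n))
    (ustar : ℝ → EuclideanSpace ℝ (Fin n) → EuclideanSpace ℝ (Fin n))
    (humem : ∀ γ > (0:ℝ), ∀ z, ustar γ z ∈ U)
    (hufin : ∀ γ > (0:ℝ), ∀ z, φ (ustar γ z) ≠ ⊤)
    (humax : ∀ γ > (0:ℝ), ∀ z, ∀ v ∈ U,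
      (⟪z, v⟫ : EReal) - φ v - ((γ * ((1/2) * ‖v - uc‖^2) : ℝ) : EReal)
        ≤ (⟪z, ustar γ z⟫ : EReal) - φ (ustar γ z)
          - ((γ * ((1/2) * ‖ustar γ z - uc‖^2) : ℝ) : EReal))
    {p : ℕ}
    (A : EuclideanSpace ℝ (Fin n) →L[ℝ] EuclideanSpace ℝ (Fin p))
    (hAnorm : 0 < ‖A‖)
    (DU : ℝ)
    (hDUbdd : BddAbove ((fun v => (1/2) * ‖v - uc‖^2) '' {v | v ∈ U ∧ φ v ≠ ⊤}))
    (hDU : DU = sSup ((fun v => (1/2) * ‖v - uc‖^2) '' {v | v ∈ U ∧ φ v ≠ ⊤}))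
    (f : EuclideanSpace ℝ (Fin p) → EReal)
    (hf : ∀ x, f x = ⨆ v ∈ U, ((⟪x, A v⟫ : EReal) - φ v))
    (g : EuclideanSpace ℝ (Fin p) → EReal)
    (hgbot : ∀ y, g y ≠ ⊥)
    (hgcx : ∀ y w : EuclideanSpace ℝ (Fin p), ∀ a c : ℝ, 0 ≤ a → 0 ≤ c → a + c = 1 →
      g (a • y + c • w) ≤ (a : EReal) * g y + (c : EReal) * g w)
    (prox : ℝ → EuclideanSpace ℝ (Fin p) → EuclideanSpace ℝ (Fin p))
    (hprox : ∀ β > (0:ℝ), ∀ x y,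
      g (prox β x) + (((2*β)⁻¹ * ‖prox β x - x‖^2 : ℝ) : EReal)
        ≤ g y + (((2*β)⁻¹ * ‖y - x‖^2 : ℝ) : EReal))
    (γ1 : ℝ) (hγ1 : 0 < γ1)
    (τ : ℕ → ℝ) (hτ : ∀ k : ℕ, τ k = 1/((k:ℝ) + 1))
    (γs : ℕ → ℝ) (hγs : ∀ k : ℕ, γs (k+1) = γ1 / ((k:ℝ) + 1))
    (x xt xh : ℕ → EuclideanSpace ℝ (Fin p))
    (hxt0 : xt 0 = x 0) (hx0dom : f (x 0) + g (x 0) ≠ ⊤)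
    (hxh : ∀ k : ℕ, xh k = (1 - τ k) • x k + τ k • xt k)
    (hxrec : ∀ k : ℕ, x (k+1)
        = prox (γs (k+1)/‖A‖^2) (xh k - (γs (k+1)/‖A‖^2) • A (ustar (γs (k+1)) ((ContinuousLinearMap.adjoint A) (xh k)))))
    (hxtrec : ∀ k : ℕ, xt (k+1) = xt k - (τ k)⁻¹ • (xh k - x (k+1)))
    (xs : EuclideanSpace ℝ (Fin p)) (Fs : ℝ)
    (hFs : f xs + g xs = (Fs : EReal))
    :
    (∀ k : ℕ, 1 ≤ k →
      (f (x k) + g (x k)) - (Fs : EReal)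
        ≤ ((‖A‖^2 * ‖x 0 - xs‖^2 / (2*γ1*(k:ℝ)) + 3*γ1*DU/(k:ℝ) : ℝ) : EReal)) ∧
    (x 0 ≠ xs → 0 < DU → γ1 = ‖A‖ * ‖x 0 - xs‖ / Real.sqrt (6*DU) →
      ∀ k : ℕ, 1 ≤ k →
        (f (x k) + g (x k)) - (Fs : EReal)
          ≤ ((‖x 0 - xs‖ * ‖A‖ * Real.sqrt (6*DU) / (k:ℝ) : ℝ) : EReal)) := by
  have hu : ∀ γ > 0, ∀ z, ustar γ z ∈ U ∩ {v | φ v ≠ ⊤}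
      ∧ IsMaxOn (smoothObj (fun v => (φ v).toReal) uc γ z) (U ∩ {v | φ v ≠ ⊤}) (ustar γ z) :=
    fun γ hγ z => ⟨⟨humem γ hγ z, hufin γ hγ z⟩,
      isMaxOn_smoothObj_toReal hφbot (hufin γ hγ z) (humax γ hγ z)⟩
  have hDUbound : ∀ v ∈ U ∩ {v | φ v ≠ ⊤}, 1 / 2 * ‖v - uc‖ ^ 2 ≤ DU :=
    fun v hv => hDU ▸ le_csSup hDUbdd ⟨v, hv, rfl⟩
  have hDUnonneg : 0 ≤ DU := (by positivity : (0 : ℝ) ≤ _).trans (hDUbound _ (hu 1 one_pos 0).1)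
  have hf_adj : ∀ y, f y = ⨆ v ∈ U, ((⟪(A†) y, v⟫ : EReal) - φ v) := by
    simpa only [ContinuousLinearMap.adjoint_inner_left] using hf
  have hfbot : ∀ y, f y ≠ ⊥ := fun y => ne_bot_of_le_ne_bot (EReal.coe_ne_bot _)
    ((hf_adj y).symm ▸ coe_le_iSup_inner_sub (hu 1 one_pos 0).1.1 (hu 1 one_pos 0).1.2 (hφbot _) _)
  obtain ⟨hfxs, hgxs, hFs'⟩ := EReal.toReal_add_toReal_of_add_eq_coe (hfbot xs) (hgbot xs) hFs
  have hprox' := fun β (hβ : 0 < β) y =>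
    isMinOn_toReal_add (q := fun w => (2 * β)⁻¹ * ‖w - y‖ ^ 2) hgbot hgxs (hprox β hβ y)
  have hγpos : ∀ j, 0 < γs (j + 1) := fun j => by rw [hγs]; positivity
  have hgx : ∀ j, g (x (j + 1)) ≠ ⊤ := fun j => by
    rw [hxrec j]; exact (hprox' _ (div_pos (hγpos j) (by positivity)) _).1
  have hgx0 : g (x 0) ≠ ⊤ := fun h0 => hx0dom (by rw [h0, EReal.add_top_of_ne_bot (hfbot _)])
  have hrate := smoothedProxGrad_rate A (convexOn_toReal_inter hφbot hφcx hUcx) hu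
    (by simpa using convexOn_toReal_inter hgbot hgcx convex_univ) hprox' hAnorm hγ1 hτ hγs hxt0
    hgx0 hxh hxrec hxtrec hgxs (Q := (f xs).toReal) (fun v hv => EReal.coe_le_coe_iff.1 <| by
      rw [EReal.coe_toReal hfxs (hfbot xs), hf_adj]
      exact coe_le_iSup_inner_sub hv.1 hv.2 (hφbot v) _)
  have hbound : ∀ k : ℕ, 1 ≤ k → (f (x k) + g (x k)) - (Fs : EReal)
      ≤ ((‖A‖^2 * ‖x 0 - xs‖^2 / (2*γ1*(k:ℝ)) + 3*γ1*DU/(k:ℝ) : ℝ) : EReal) := by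
    intro k hk
    obtain ⟨j, rfl⟩ := Nat.exists_eq_add_of_le' hk
    refine EReal.add_sub_coe_le ((hf_adj _).trans_le (iSup_inner_sub_le_smoothObj hφbot (hγpos j).le
      hDUbound (hu _ (hγpos j) _).2)) (EReal.coe_toReal (hgx j) (hgbot _)).ge ?_
    have hsmooth : γs (j + 1) * DU ≤ 3 * γ1 * DU / ((j : ℝ) + 1) := by
      rw [hγs, div_mul_eq_mul_div]
      gcongr
      nlinarith
    have hj := hrate j
    rw [smoothConj] at hj
    push_cast
    linarith
  refine ⟨hbound, fun hne hDpos hγval k hk => (hbound k hk).trans_eq ?_⟩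
  rw [sq_div_add_three_mul_div_of_eq_div_sqrt hAnorm (norm_pos_iff.2 (sub_ne_zero.2 hne))
    hDpos hγval]

theorem stmt_16
    {n : ℕ} (hn : 1 ≤ n)
    (U : Set (EuclideanSpace ℝ (Fin n)))
    (hUne : U.Nonempty) (hUcl : IsClosed U) (hUcx : Convex ℝ U)
    (φ : EuclideanSpace ℝ (Fin n) → EReal)
    (hφbot : ∀ v, φ v ≠ ⊥)
    (hφlsc : LowerSemicontinuous φ)
    (hφcx : ∀ v w : EuclideanSpace ℝ (Fin n), ∀ a c : ℝ, 0 ≤ a → 0 ≤ c → a + c = 1 →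
      φ (a • v + c • w) ≤ (a : EReal) * φ v + (c : EReal) * φ w)
    (hφdom : ∃ v ∈ U, φ v ≠ ⊤)
    (uc : EuclideanSpace ℝ (Fin n)) (hucU : uc ∈ U)
    (ustar : ℝ → EuclideanSpace ℝ (Fin n) → EuclideanSpace ℝ (Fin n))
    (humem : ∀ γ > (0:ℝ), ∀ z, ustar γ z ∈ U)
    (hufin : ∀ γ > (0:ℝ), ∀ z, φ (ustar γ z) ≠ ⊤)
    (humax : ∀ γ > (0:ℝ), ∀ z, ∀ v ∈ U,
      (⟪z, v⟫ : EReal) - φ v - ((γ * ((1/2) * ‖v - uc‖^2) : ℝ) : EReal)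
        ≤ (⟪z, ustar γ z⟫ : EReal) - φ (ustar γ z)
          - ((γ * ((1/2) * ‖ustar γ z - uc‖^2) : ℝ) : EReal))
    (φs : ℝ → EuclideanSpace ℝ (Fin n) → ℝ)
    (hφs : ∀ γ z, φs γ z = ⟪z, ustar γ z⟫ - (φ (ustar γ z)).toReal
        - γ * ((1/2) * ‖ustar γ z - uc‖^2))
    {p : ℕ} (hp : 1 ≤ p)
    (A : EuclideanSpace ℝ (Fin n) →L[ℝ] EuclideanSpace ℝ (Fin p))
    (hAnorm : 0 < ‖A‖)
    (DU : ℝ)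
    (hDUbdd : BddAbove ((fun v => (1/2) * ‖v - uc‖^2) '' {v | v ∈ U ∧ φ v ≠ ⊤}))
    (hDU : DU = sSup ((fun v => (1/2) * ‖v - uc‖^2) '' {v | v ∈ U ∧ φ v ≠ ⊤}))
    (f : EuclideanSpace ℝ (Fin p) → EReal)
    (hf : ∀ x, f x = ⨆ v ∈ U, ((⟪x, A v⟫ : EReal) - φ v))
    (g : EuclideanSpace ℝ (Fin p) → EReal)
    (hgbot : ∀ y, g y ≠ ⊥)
    (hgdom : ∃ y, g y ≠ ⊤)
    (hglsc : LowerSemicontinuous g)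
    (hgcx : ∀ y w : EuclideanSpace ℝ (Fin p), ∀ a c : ℝ, 0 ≤ a → 0 ≤ c → a + c = 1 →
      g (a • y + c • w) ≤ (a : EReal) * g y + (c : EReal) * g w)
    (prox : ℝ → EuclideanSpace ℝ (Fin p) → EuclideanSpace ℝ (Fin p))
    (hprox : ∀ β > (0:ℝ), ∀ x y,
      g (prox β x) + (((2*β)⁻¹ * ‖prox β x - x‖^2 : ℝ) : EReal)
        ≤ g y + (((2*β)⁻¹ * ‖y - x‖^2 : ℝ) : EReal))
    (hproxu : ∀ β > (0:ℝ), ∀ x y,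
      (∀ w, g y + (((2*β)⁻¹ * ‖y - x‖^2 : ℝ) : EReal)
          ≤ g w + (((2*β)⁻¹ * ‖w - x‖^2 : ℝ) : EReal)) → y = prox β x)
    (γ1 : ℝ) (hγ1 : 0 < γ1)
    (τ : ℕ → ℝ) (hτ : ∀ k : ℕ, τ k = 1/((k:ℝ) + 1))
    (γs : ℕ → ℝ) (hγs : ∀ k : ℕ, γs (k+1) = γ1 / ((k:ℝ) + 1))
    (x xt xh : ℕ → EuclideanSpace ℝ (Fin p))
    (hxt0 : xt 0 = x 0) (hx0dom : f (x 0) + g (x 0) ≠ ⊤)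
    (hxh : ∀ k : ℕ, xh k = (1 - τ k) • x k + τ k • xt k)
    (hxrec : ∀ k : ℕ, x (k+1)
        = prox (γs (k+1)/‖A‖^2) (xh k - (γs (k+1)/‖A‖^2) • A (ustar (γs (k+1)) ((ContinuousLinearMap.adjoint A) (xh k)))))
    (hxtrec : ∀ k : ℕ, xt (k+1) = xt k - (τ k)⁻¹ • (xh k - x (k+1)))
    (xs : EuclideanSpace ℝ (Fin p)) (Fs : ℝ)
    (hFs : f xs + g xs = (Fs : EReal)) (hFmin : ∀ y, (Fs : EReal) ≤ f y + g y)
    :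
    (∀ k : ℕ, 1 ≤ k →
      (f (x k) + g (x k)) - (Fs : EReal)
        ≤ ((‖A‖^2 * ‖x 0 - xs‖^2 / (2*γ1*(k:ℝ)) + 3*γ1*DU/(k:ℝ) : ℝ) : EReal)) ∧
    (x 0 ≠ xs → 0 < DU → γ1 = ‖A‖ * ‖x 0 - xs‖ / Real.sqrt (6*DU) →
      ∀ k : ℕ, 1 ≤ k →
        (f (x k) + g (x k)) - (Fs : EReal)
          ≤ ((‖x 0 - xs‖ * ‖A‖ * Real.sqrt (6*DU) / (k:ℝ) : ℝ) : EReal)) :=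
  stmt_16_general U hUcx φ hφbot hφcx uc ustar humem hufin humax A hAnorm DU hDUbdd hDU f hf g hgbot
    hgcx prox hprox γ1 hγ1 τ hτ γs hγs x xt xh hxt0 hx0dom hxh hxrec hxtrec xs Fs hFs
end

section
/- For every k ≥ 0, the averaged primal iterate satisfies ū^k ∈ U, and −‖x*‖·dist(b − Aū^k, K) ≤ φ(ū^k) − φ* ≤ ( ‖A‖²·‖x⁰‖² + 2(γ₁ + 2γ₁²)·D_U )/( γ₁·(k + 1) ). -/
/-!
The scheme is an accelerated proximal-gradient method for the smoothed dual `f_γ + g`, with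
`f_γ(y) = max_{u ∈ U} ⟪y, A u⟫ - φ u - γ b_U(u)` attained at `u*_γ(y)`. Strong concavity of the
smoothed Lagrangian gives `f_γ` a descent inequality with constant `‖A‖² / γ`; combined with the
three-point inequality of the prox step, tested at `(1 - τ_k) x^k` (that is, against `0` rather
than against `x*`), it yields the potential decrease
`(k+1) (f_{γ_{k+1}} + g)(x^{k+1}) + ‖A‖²/(2γ₁) ‖x̃^{k+1}‖²
  ≤ k (f_{γ_k} + g)(x^k) - φ(u*_{γ_{k+1}}(x̂^k)) + ‖A‖²/(2γ₁) ‖x̃^k‖²`.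
Telescoping, together with `f_γ + g ≥ F - γ D_U ≥ -φ* - γ D_U`, bounds the average of the
`φ(u*_{γ_{i+1}}(x̂^i))`, which dominates `φ(ū^k)` by Jensen. The lower bound is the saddle-point
inequality at `ū^k`, optimised over `r ∈ K`.
-/

open scoped RealInnerProductSpace BigOperators
open Filter Topology

theorem le_of_forall_pos_le_add_mul {a b r : ℝ} (h : ∀ t : ℝ, 0 < t → t ≤ 1 → a ≤ b + t * r) :
    a ≤ b := by
  have hlim : Tendsto (fun t : ℝ => b + t * r) (𝓝[>] 0) (𝓝 b) := by
    have : Continuous fun t : ℝ => b + t * r := by fun_prop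
    simpa using (this.tendsto 0).mono_left nhdsWithin_le_nhds
  refine ge_of_tendsto hlim ?_
  filter_upwards [Ioc_mem_nhdsGT one_pos] with t ht using h t ht.1 ht.2

theorem le_mul_infDist {X : Type*} [PseudoMetricSpace X] {K : Set X} (hK : K.Nonempty) {y : X}
    {a c : ℝ} (hc : 0 ≤ c) (h : ∀ r ∈ K, a ≤ c * dist y r) : a ≤ c * Metric.infDist y K := by
  rcases hc.eq_or_lt with rfl | hc
  · simpa using h _ hK.some_mem
  rw [← div_le_iff₀' hc]
  exact (Metric.le_infDist hK).2 fun r hr => (div_le_iff₀' hc).2 (h r hr)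

section InnerProductSpace

variable {E : Type*} [NormedAddCommGroup E] [InnerProductSpace ℝ E]

theorem norm_add_smul_sq (v w : E) (t : ℝ) :
    ‖v + t • w‖ ^ 2 = ‖v‖ ^ 2 + 2 * t * ⟪v, w⟫ + t ^ 2 * ‖w‖ ^ 2 := by
  rw [norm_add_sq_real, real_inner_smul_right, norm_smul, mul_pow, Real.norm_eq_abs, sq_abs]
  ring

theorem ConvexOn.add_sq_norm_sub_le_of_isMinOn {S : Set E} {ψ : E → ℝ} (hψ : ConvexOn ℝ S ψ)
    {κ : ℝ} {w u v : E} (hu : u ∈ S) (hmin : IsMinOn (fun z => ψ z + κ * ‖z - w‖ ^ 2) S u)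
    (hv : v ∈ S) :
    ψ u + κ * ‖u - w‖ ^ 2 + κ * ‖v - u‖ ^ 2 ≤ ψ v + κ * ‖v - w‖ ^ 2 := by
  have hfirst : ψ u ≤ ψ v + 2 * κ * ⟪u - w, v - u⟫ := by
    refine le_of_forall_pos_le_add_mul (r := κ * ‖v - u‖ ^ 2) fun t ht0 ht1 => ?_
    have hconv := hψ.2 hu hv (sub_nonneg.2 ht1) ht0.le (sub_add_cancel 1 t)
    have hmin_t := isMinOn_iff.1 hmin _ (hψ.1 hu hv (sub_nonneg.2 ht1) ht0.le (sub_add_cancel 1 t))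
    have hsplit : (1 - t) • u + t • v - w = (u - w) + t • (v - u) := by module
    rw [hsplit, norm_add_smul_sq] at hmin_t
    simp only [smul_eq_mul] at hconv
    have : t * ψ u ≤ t * (ψ v + 2 * κ * ⟪u - w, v - u⟫ + t * (κ * ‖v - u‖ ^ 2)) := by
      linear_combination hmin_t + hconv
    exact le_of_mul_le_mul_left this ht0
  have hexp := norm_add_sq_real (v - u) (u - w)
  rw [sub_add_sub_cancel, real_inner_comm] at hexp
  rw [hexp]
  linear_combination hfirst

theorem ConvexOn.proxGrad_step_le {T : Set E} {g : E → ℝ} (hg : ConvexOn ℝ T g) {f : E → ℝ}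
    {β : ℝ} (hβ : β ≠ 0) {y d x' z : E} (hx' : x' ∈ T)
    (hmin : IsMinOn (fun z => g z + (2 * β)⁻¹ * ‖z - (y - β • d)‖ ^ 2) T x')
    (hdesc : f x' ≤ f y + ⟪d, x' - y⟫ + (2 * β)⁻¹ * ‖x' - y‖ ^ 2) (hz : z ∈ T) :
    f x' + g x' + (2 * β)⁻¹ * ‖z - x'‖ ^ 2
      ≤ f y + ⟪d, z - y⟫ + g z + (2 * β)⁻¹ * ‖z - y‖ ^ 2 := by
  have h3 := hg.add_sq_norm_sub_le_of_isMinOn hx' hmin hz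
  have hshift : ∀ v : E, v - (y - β • d) = (v - y) + β • d := fun v => by module
  rw [hshift, hshift, norm_add_smul_sq, norm_add_smul_sq] at h3
  have hβ' : (2 * β)⁻¹ * (2 * β) = 1 := inv_mul_cancel₀ (mul_ne_zero two_ne_zero hβ)
  rw [real_inner_comm d (x' - y), real_inner_comm d (z - y)] at h3
  linear_combination h3 + hdesc + (⟪d, z - y⟫ - ⟪d, x' - y⟫) * hβ'

theorem sub_le_mul_infDist_of_forall_inner {K : Set E} (hK : K.Nonempty) {y z : E} {a c : ℝ}
    (h : ∀ r ∈ K, a + ⟪z, r - y⟫ ≤ c) : a - c ≤ ‖z‖ * Metric.infDist y K :=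
  le_mul_infDist hK (norm_nonneg z) fun r hr => by
    have hcs : -⟪z, r - y⟫ ≤ ‖z‖ * ‖y - r‖ := by
      rw [← inner_neg_right, neg_sub]; exact real_inner_le_norm _ _
    rw [dist_eq_norm]
    linarith [h r hr]

end InnerProductSpace

section ExtendedValued

variable {V : Type*} [AddCommGroup V] [Module ℝ V] {S : Set V} {f : V → EReal}

theorem convexOn_toReal_of_le (hS : Convex ℝ S) (hbot : ∀ v, f v ≠ ⊥)
    (hf : ∀ v ∈ S, ∀ w ∈ S, f v ≠ ⊤ → f w ≠ ⊤ → ∀ a b : ℝ, 0 ≤ a → 0 ≤ b → a + b = 1 →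
      f (a • v + b • w) ≤ ((a * (f v).toReal + b * (f w).toReal : ℝ) : EReal)) :
    ConvexOn ℝ {v | v ∈ S ∧ f v ≠ ⊤} fun v => (f v).toReal := by
  refine ⟨fun v hv w hw a b ha hb hab => ⟨hS hv.1 hw.1 ha hb hab,
    ne_top_of_le_ne_top (EReal.coe_ne_top _) (hf v hv.1 w hw.1 hv.2 hw.2 a b ha hb hab)⟩,
    fun v hv w hw a b ha hb hab => ?_⟩
  have h := EReal.toReal_le_toReal (hf v hv.1 w hw.1 hv.2 hw.2 a b ha hb hab) (hbot _)
    (EReal.coe_ne_top _)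
  rwa [EReal.toReal_coe] at h

theorem convexOn_toReal_of_le_mul_add (hS : Convex ℝ S) (hbot : ∀ v, f v ≠ ⊥)
    (hf : ∀ v w : V, ∀ a b : ℝ, 0 ≤ a → 0 ≤ b → a + b = 1 →
      f (a • v + b • w) ≤ (a : EReal) * f v + (b : EReal) * f w) :
    ConvexOn ℝ {v | v ∈ S ∧ f v ≠ ⊤} fun v => (f v).toReal := by
  refine convexOn_toReal_of_le hS hbot fun v _ w _ hv hw a b ha hb hab => ?_
  have h := hf v w a b ha hb hab
  rwa [← EReal.coe_toReal hv (hbot v), ← EReal.coe_toReal hw (hbot w), ← EReal.coe_mul,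
    ← EReal.coe_mul, ← EReal.coe_add] at h

theorem isMinOn_toReal_add_of_forall_le {α : Type*} {f : α → EReal} (hbot : ∀ y, f y ≠ ⊥)
    (hdom : ∃ y, f y ≠ ⊤) {q : α → ℝ} {p : α}
    (hp : ∀ y, f p + (q p : EReal) ≤ f y + (q y : EReal)) :
    p ∈ {y | f y ≠ ⊤} ∧ IsMinOn (fun y => (f y).toReal + q y) {y | f y ≠ ⊤} p := by
  have hfin : f p ≠ ⊤ := by
    obtain ⟨y, hy⟩ := hdom
    refine fun htop => (hp y).not_gt ?_
    rw [htop, EReal.top_add_coe, ← EReal.coe_toReal hy (hbot y), ← EReal.coe_add]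
    exact EReal.coe_lt_top _
  refine ⟨hfin, isMinOn_iff.2 fun y hy => ?_⟩
  have h := hp y
  rwa [← EReal.coe_toReal hfin (hbot p), ← EReal.coe_toReal hy (hbot y), ← EReal.coe_add,
    ← EReal.coe_add, EReal.coe_le_coe_iff] at h

end ExtendedValued

section Smoothing

variable {E F : Type*} [NormedAddCommGroup E] [InnerProductSpace ℝ E]
  [NormedAddCommGroup F] [InnerProductSpace ℝ F]

noncomputable def smoothedLagrangian (A : E →L[ℝ] F) (φ : E → ℝ) (c : E) (γ : ℝ) (y : F) (v : E) :
    ℝ :=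
  ⟪y, A v⟫ - φ v - γ * (1 / 2 * ‖v - c‖ ^ 2)

variable {A : E →L[ℝ] F} {φ : E → ℝ} {c : E} {S : Set E}

theorem smoothedLagrangian_add_sq_le (hφ : ConvexOn ℝ S φ) {γ : ℝ} {y : F} {u v : E}
    (hu : u ∈ S) (hmax : IsMaxOn (smoothedLagrangian A φ c γ y) S u) (hv : v ∈ S) :
    smoothedLagrangian A φ c γ y v + γ / 2 * ‖v - u‖ ^ 2 ≤ smoothedLagrangian A φ c γ y u := by
  have hpairing : ConcaveOn ℝ S fun z => ⟪y, A z⟫ :=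
    ((innerSL ℝ y).comp A).toLinearMap.concaveOn hφ.1
  have hmin : IsMinOn (fun z => (φ - fun z => ⟪y, A z⟫) z + γ / 2 * ‖z - c‖ ^ 2) S u := by
    refine isMinOn_iff.2 fun z hz => ?_
    have := isMaxOn_iff.1 hmax z hz
    simp only [smoothedLagrangian, Pi.sub_apply] at this ⊢
    linarith
  have := (hφ.sub hpairing).add_sq_norm_sub_le_of_isMinOn hu hmin hv
  simp only [smoothedLagrangian, Pi.sub_apply] at this ⊢
  linarith

theorem smoothedLagrangian_descent (hφ : ConvexOn ℝ S φ) {γ : ℝ} (hγ : 0 < γ) {u : F → E}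
    (hu : ∀ y, u y ∈ S ∧ IsMaxOn (smoothedLagrangian A φ c γ y) S (u y)) (y z : F) :
    smoothedLagrangian A φ c γ z (u z) ≤ smoothedLagrangian A φ c γ y (u y)
      + ⟪A (u y), z - y⟫ + ‖A‖ ^ 2 / (2 * γ) * ‖z - y‖ ^ 2 := by
  have hstrong := smoothedLagrangian_add_sq_le hφ (hu y).1 (hu y).2 (hu z).1
  have hshift : smoothedLagrangian A φ c γ z (u z)
      = smoothedLagrangian A φ c γ y (u z) + ⟪z - y, A (u z)⟫ := by
    simp only [smoothedLagrangian, inner_sub_left]; ring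
  have hsplit : ⟪z - y, A (u z)⟫ = ⟪A (u y), z - y⟫ + ⟪z - y, A (u z - u y)⟫ := by
    rw [map_sub, inner_sub_right (z - y), real_inner_comm (A (u y))]; ring
  have hcs : ⟪z - y, A (u z - u y)⟫ ≤ ‖z - y‖ * (‖A‖ * ‖u z - u y‖) :=
    (real_inner_le_norm _ _).trans
      (mul_le_mul_of_nonneg_left (A.le_opNorm _) (norm_nonneg _))
  -- Young's inequality `ab ≤ γa²/2 + b²/(2γ)` with `a = ‖u z - u y‖`, `b = ‖A‖‖z - y‖`
  have hyoung : ‖z - y‖ * (‖A‖ * ‖u z - u y‖)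
      ≤ γ / 2 * ‖u z - u y‖ ^ 2 + ‖A‖ ^ 2 / (2 * γ) * ‖z - y‖ ^ 2 := by
    have hsq : 0 ≤ (γ * ‖u z - u y‖ - ‖A‖ * ‖z - y‖) ^ 2 / (2 * γ) := by positivity
    have hexpand : (γ * ‖u z - u y‖ - ‖A‖ * ‖z - y‖) ^ 2 / (2 * γ)
        = γ / 2 * ‖u z - u y‖ ^ 2 + ‖A‖ ^ 2 / (2 * γ) * ‖z - y‖ ^ 2
          - ‖z - y‖ * (‖A‖ * ‖u z - u y‖) := by
      field_simp; ring
    linarith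
  linarith

theorem smoothedLagrangian_add_inner_le {γ γ' τ : ℝ} {x y : F} {u v : E}
    (hmax : IsMaxOn (smoothedLagrangian A φ c γ x) S u) (hv : v ∈ S) (hτ : τ ≤ 1)
    (hγ : (1 - τ) * γ ≤ γ') :
    smoothedLagrangian A φ c γ' y v + ⟪A v, (1 - τ) • x - y⟫
      ≤ (1 - τ) * smoothedLagrangian A φ c γ x u - τ * φ v := by
  have hle := mul_le_mul_of_nonneg_left (isMaxOn_iff.1 hmax v hv) (sub_nonneg.2 hτ)
  have hb : 0 ≤ 1 / 2 * ‖v - c‖ ^ 2 := by positivity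
  have hγb := mul_le_mul_of_nonneg_right hγ hb
  simp only [smoothedLagrangian, inner_sub_right, real_inner_smul_right, real_inner_comm (A v)]
    at hle ⊢
  linear_combination hle + hγb

end Smoothing

section AcceleratedMethod

variable {E F : Type*} [NormedAddCommGroup E] [InnerProductSpace ℝ E]
  [NormedAddCommGroup F] [InnerProductSpace ℝ F]
  {A : E →L[ℝ] F} {φ : E → ℝ} {c : E} {S : Set E} {u : ℝ → F → E}
  {T : Set F} {g : F → ℝ} {prox : ℝ → F → F}

theorem accelerated_step_estimate (hφ : ConvexOn ℝ S φ)
    (hu : ∀ γ > 0, ∀ y, u γ y ∈ S ∧ IsMaxOn (smoothedLagrangian A φ c γ y) S (u γ y))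
    (hg : ConvexOn ℝ T g)
    (hprox : ∀ β > 0, ∀ w,
      prox β w ∈ T ∧ IsMinOn (fun z => g z + (2 * β)⁻¹ * ‖z - w‖ ^ 2) T (prox β w))
    (hA : 0 < ‖A‖) {τ γ γ' : ℝ} (hτ0 : 0 < τ) (hτ1 : τ ≤ 1) (hγ : 0 < γ) (hγ' : 0 < γ')
    (hγγ' : (1 - τ) * γ ≤ γ') {x xt xh x' xt' : F}
    (hz : (1 - τ) • x ∈ T) (hgz : g ((1 - τ) • x) ≤ (1 - τ) * g x)
    (hxh : xh = (1 - τ) • x + τ • xt)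
    (hx' : x' = prox (γ' / ‖A‖ ^ 2) (xh - (γ' / ‖A‖ ^ 2) • A (u γ' xh)))
    (hxt' : xt' = xt - τ⁻¹ • (xh - x')) :
    smoothedLagrangian A φ c γ' x' (u γ' x') + g x' + ‖A‖ ^ 2 * τ ^ 2 / (2 * γ') * ‖xt'‖ ^ 2
      ≤ (1 - τ) * (smoothedLagrangian A φ c γ x (u γ x) + g x) - τ * φ (u γ' xh)
        + ‖A‖ ^ 2 * τ ^ 2 / (2 * γ') * ‖xt‖ ^ 2 := by
  set β := γ' / ‖A‖ ^ 2 with hβdef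
  have hβ : 0 < β := by positivity
  have hcoef : (2 * β)⁻¹ = ‖A‖ ^ 2 / (2 * γ') := by rw [hβdef]; field_simp
  obtain ⟨hx'T, hx'min⟩ := hprox β hβ (xh - β • A (u γ' xh))
  rw [← hx'] at hx'T hx'min
  have hdesc := smoothedLagrangian_descent hφ hγ' (hu γ' hγ') xh x'
  rw [← hcoef] at hdesc
  have hstep := hg.proxGrad_step_le (f := fun y => smoothedLagrangian A φ c γ' y (u γ' y))
    hβ.ne' hx'T hx'min hdesc hz
  have hinterp := smoothedLagrangian_add_inner_le (y := xh) (hu γ hγ x).2 (hu γ' hγ' xh).1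
    hτ1 hγγ'
  have hfar : (1 - τ) • x - x' = -(τ • xt') := by
    rw [hxt', smul_sub, smul_smul, mul_inv_cancel₀ hτ0.ne', one_smul, hxh]; module
  have hnear : (1 - τ) • x - xh = -(τ • xt) := by rw [hxh]; module
  have hsq : ∀ v : F, ‖-(τ • v)‖ ^ 2 = τ ^ 2 * ‖v‖ ^ 2 := fun v => by
    rw [norm_neg, norm_smul, mul_pow, Real.norm_eq_abs, sq_abs]
  rw [hfar, hsq, hnear, hsq, hcoef] at hstep
  rw [hnear] at hinterp
  linear_combination hstep + hinterp + hgz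

-- `S` and `T` play the roles of `U ∩ dom φ` and `dom g`, where `φ` and `g` are real-valued.
structure IsSmoothedProxSetup (A : E →L[ℝ] F) (φ : E → ℝ) (c : E) (S : Set E) (u : ℝ → F → E)
    (g : F → ℝ) (T : Set F) (prox : ℝ → F → F) : Prop where
  convexOn_φ : ConvexOn ℝ S φ
  isMaxOn_u : ∀ γ > 0, ∀ y, u γ y ∈ S ∧ IsMaxOn (smoothedLagrangian A φ c γ y) S (u γ y)
  convexOn_g : ConvexOn ℝ T g
  zero_mem : (0 : F) ∈ T
  g_zero : g 0 = 0
  isMinOn_prox : ∀ β > 0, ∀ w,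
    prox β w ∈ T ∧ IsMinOn (fun z => g z + (2 * β)⁻¹ * ‖z - w‖ ^ 2) T (prox β w)

structure IsAcceleratedIterate (A : E →L[ℝ] F) (u : ℝ → F → E) (prox : ℝ → F → F) (γ₁ : ℝ)
    (τ γ : ℕ → ℝ) (x xt xh : ℕ → F) : Prop where
  τ_eq : ∀ k : ℕ, τ k = 1 / ((k : ℝ) + 1)
  γ_succ : ∀ k : ℕ, γ (k + 1) = γ₁ / ((k : ℝ) + 1)
  xt_zero : xt 0 = x 0
  xh_eq : ∀ k, xh k = (1 - τ k) • x k + τ k • xt k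
  x_succ : ∀ k, x (k + 1)
    = prox (γ (k + 1) / ‖A‖ ^ 2) (xh k - (γ (k + 1) / ‖A‖ ^ 2) • A (u (γ (k + 1)) (xh k)))
  xt_succ : ∀ k, xt (k + 1) = xt k - (τ k)⁻¹ • (xh k - x (k + 1))

namespace IsAcceleratedIterate

variable {γ₁ : ℝ} {τ γ : ℕ → ℝ} {x xt xh : ℕ → F}

theorem τ_pos (hit : IsAcceleratedIterate A u prox γ₁ τ γ x xt xh) (k : ℕ) : 0 < τ k := by
  rw [hit.τ_eq]; positivity

theorem τ_le_one (hit : IsAcceleratedIterate A u prox γ₁ τ γ x xt xh) (k : ℕ) : τ k ≤ 1 := by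
  rw [hit.τ_eq, div_le_one (by positivity)]; linarith [k.cast_nonneg (α := ℝ)]

theorem γ_succ_pos (hit : IsAcceleratedIterate A u prox γ₁ τ γ x xt xh) (hγ₁ : 0 < γ₁) (k : ℕ) :
    0 < γ (k + 1) := by
  rw [hit.γ_succ]; positivity

theorem x_succ_mem (hit : IsAcceleratedIterate A u prox γ₁ τ γ x xt xh)
    (hprox : ∀ β > 0, ∀ w, prox β w ∈ T) (hA : 0 < ‖A‖) (hγ₁ : 0 < γ₁) (k : ℕ) :
    x (k + 1) ∈ T := by
  rw [hit.x_succ]; exact hprox _ (div_pos (hit.γ_succ_pos hγ₁ k) (by positivity)) _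

theorem potential_succ_le (hit : IsAcceleratedIterate A u prox γ₁ τ γ x xt xh)
    (hs : IsSmoothedProxSetup A φ c S u g T prox) (hA : 0 < ‖A‖) (hγ₁ : 0 < γ₁) (k : ℕ) :
    ((k : ℝ) + 1) * (smoothedLagrangian A φ c (γ (k + 1)) (x (k + 1)) (u (γ (k + 1)) (x (k + 1)))
        + g (x (k + 1))) + ‖A‖ ^ 2 / (2 * γ₁) * ‖xt (k + 1)‖ ^ 2
      ≤ (k : ℝ) * (smoothedLagrangian A φ c (γ k) (x k) (u (γ k) (x k)) + g (x k))
        - φ (u (γ (k + 1)) (xh k)) + ‖A‖ ^ 2 / (2 * γ₁) * ‖xt k‖ ^ 2 := by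
  -- at `k = 0` the weight `1 - τ 0` vanishes, so any positive parameter can stand in for `γ 0`
  obtain ⟨γ₀, hγ₀, hγγ', hz, hgz, hprev⟩ : ∃ γ₀ > 0, (1 - τ k) * γ₀ ≤ γ (k + 1) ∧
      (1 - τ k) • x k ∈ T ∧ g ((1 - τ k) • x k) ≤ (1 - τ k) * g (x k) ∧
      (k : ℝ) * (smoothedLagrangian A φ c (γ k) (x k) (u (γ k) (x k)) + g (x k))
        = ((k : ℝ) + 1) * ((1 - τ k)
          * (smoothedLagrangian A φ c γ₀ (x k) (u γ₀ (x k)) + g (x k))) := by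
    rcases k with _ | k
    · have h1 : 1 - τ 0 = 0 := by rw [hit.τ_eq]; norm_num
      refine ⟨γ₁, hγ₁, ?_, ?_, ?_, ?_⟩ <;>
        simp [h1, (hit.γ_succ_pos hγ₁ 0).le, hs.zero_mem, hs.g_zero]
    · have hxT := hit.x_succ_mem (fun β hβ w => (hs.isMinOn_prox β hβ w).1) hA hγ₁ k
      have hw : 0 ≤ 1 - τ (k + 1) := sub_nonneg.2 (hit.τ_le_one _)
      have hw' : 1 - τ (k + 1) ≤ 1 := by linarith [hit.τ_pos (k + 1)]
      refine ⟨γ (k + 1), hit.γ_succ_pos hγ₁ k, ?_,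
        hs.convexOn_g.1.smul_mem_of_zero_mem hs.zero_mem hxT ⟨hw, hw'⟩, ?_, ?_⟩
      · refine le_of_eq ?_
        rw [hit.γ_succ, hit.γ_succ, hit.τ_eq]; push_cast; field_simp; ring
      · simpa [hs.g_zero] using hs.convexOn_g.2 hxT hs.zero_mem hw (hit.τ_pos _).le (by ring)
      · rw [hit.τ_eq]; push_cast; field_simp; ring
  have hstep := accelerated_step_estimate hs.convexOn_φ hs.isMaxOn_u hs.convexOn_g
    hs.isMinOn_prox hA (hit.τ_pos k) (hit.τ_le_one k) hγ₀
    (hit.γ_succ_pos hγ₁ k) hγγ' hz hgz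
    (hit.xh_eq k) (hit.x_succ k) (hit.xt_succ k)
  have hcoef : ((k : ℝ) + 1) * (‖A‖ ^ 2 * τ k ^ 2 / (2 * γ (k + 1))) = ‖A‖ ^ 2 / (2 * γ₁) := by
    rw [hit.τ_eq, hit.γ_succ]; field_simp
  have hτk : ((k : ℝ) + 1) * τ k = 1 := by rw [hit.τ_eq]; field_simp
  rw [hprev, ← hcoef]
  linear_combination ((k : ℝ) + 1) * hstep - φ (u (γ (k + 1)) (xh k)) * hτk

theorem sum_primal_le (hit : IsAcceleratedIterate A u prox γ₁ τ γ x xt xh)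
    (hs : IsSmoothedProxSetup A φ c S u g T prox) (hA : 0 < ‖A‖) (hγ₁ : 0 < γ₁) {φ₀ D : ℝ}
    (hlow : ∀ γ > 0, ∀ y ∈ T, -φ₀ - γ * D ≤ smoothedLagrangian A φ c γ y (u γ y) + g y)
    (k : ℕ) :
    ∑ i ∈ Finset.range (k + 1), φ (u (γ (i + 1)) (xh i))
      ≤ ((k : ℝ) + 1) * φ₀ + γ₁ * D + ‖A‖ ^ 2 / (2 * γ₁) * ‖x 0‖ ^ 2 := by
  set P : ℕ → ℝ := fun j => (j : ℝ) * (smoothedLagrangian A φ c (γ j) (x j) (u (γ j) (x j))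
    + g (x j)) + ‖A‖ ^ 2 / (2 * γ₁) * ‖xt j‖ ^ 2 with hP
  have htel : ∑ i ∈ Finset.range (k + 1), φ (u (γ (i + 1)) (xh i)) ≤ P 0 - P (k + 1) := by
    rw [← Finset.sum_range_sub']
    refine Finset.sum_le_sum fun i _ => ?_
    have := hit.potential_succ_le hs hA hγ₁ i
    simp only [hP]; push_cast; linarith
  have hP0 : P 0 = ‖A‖ ^ 2 / (2 * γ₁) * ‖x 0‖ ^ 2 := by simp [hP, hit.xt_zero]
  have hPk : -(((k : ℝ) + 1) * φ₀) - γ₁ * D ≤ P (k + 1) := by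
    have hlast := hlow _ (hit.γ_succ_pos hγ₁ k) _
      (hit.x_succ_mem (fun β hβ w => (hs.isMinOn_prox β hβ w).1) hA hγ₁ k)
    have hγk : ((k : ℝ) + 1) * γ (k + 1) = γ₁ := by rw [hit.γ_succ]; field_simp
    have hxt : 0 ≤ ‖A‖ ^ 2 / (2 * γ₁) * ‖xt (k + 1)‖ ^ 2 := by positivity
    simp only [hP]; push_cast
    linear_combination ((k : ℝ) + 1) * hlast + hxt + D * hγk
  linarith

theorem map_average_le (hit : IsAcceleratedIterate A u prox γ₁ τ γ x xt xh)
    (hφ : ConvexOn ℝ S φ) (hmem : ∀ k, u (γ (k + 1)) (xh k) ∈ S) (hγ₁ : 0 < γ₁) {ū : ℕ → E}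
    (hū : ∀ k : ℕ, ū k = (γ₁ * ((k : ℝ) + 1))⁻¹ •
      ∑ i ∈ Finset.range (k + 1), (γ (i + 1) / τ i) • u (γ (i + 1)) (xh i))
    (k : ℕ) :
    ū k ∈ S ∧ φ (ū k) ≤ (∑ i ∈ Finset.range (k + 1), φ (u (γ (i + 1)) (xh i))) / ((k : ℝ) + 1) := by
  have hweight : ∀ i, γ (i + 1) / τ i = γ₁ := fun i => by
    rw [hit.γ_succ, hit.τ_eq]; field_simp
  have hsum : ∑ i ∈ Finset.range (k + 1), γ (i + 1) / τ i = γ₁ * ((k : ℝ) + 1) := by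
    simp [hweight, mul_comm]
  have hpos : 0 < ∑ i ∈ Finset.range (k + 1), γ (i + 1) / τ i := by rw [hsum]; positivity
  have hw : ∀ i ∈ Finset.range (k + 1), 0 ≤ γ (i + 1) / τ i := fun i _ => by
    rw [hweight]; exact hγ₁.le
  have hcenter : ū k = (Finset.range (k + 1)).centerMass (fun i => γ (i + 1) / τ i)
      (fun i => u (γ (i + 1)) (xh i)) := by
    rw [hū, Finset.centerMass, hsum]
  rw [hcenter]
  refine ⟨hφ.1.centerMass_mem hw hpos fun i _ => hmem i,
    (hφ.map_centerMass_le hw hpos fun i _ => hmem i).trans_eq ?_⟩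
  rw [Finset.centerMass, hsum]
  simp only [Function.comp_apply, smul_eq_mul, hweight, ← Finset.mul_sum]
  field_simp

theorem primal_gap_le (hit : IsAcceleratedIterate A u prox γ₁ τ γ x xt xh)
    (hs : IsSmoothedProxSetup A φ c S u g T prox) (hA : 0 < ‖A‖) (hγ₁ : 0 < γ₁) {φ₀ D : ℝ}
    (hlow : ∀ γ > 0, ∀ y ∈ T, -φ₀ - γ * D ≤ smoothedLagrangian A φ c γ y (u γ y) + g y)
    (hD : 0 ≤ D) {ū : ℕ → E}
    (hū : ∀ k : ℕ, ū k = (γ₁ * ((k : ℝ) + 1))⁻¹ •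
      ∑ i ∈ Finset.range (k + 1), (γ (i + 1) / τ i) • u (γ (i + 1)) (xh i))
    (k : ℕ) :
    ū k ∈ S ∧ φ (ū k) - φ₀
      ≤ (‖A‖ ^ 2 * ‖x 0‖ ^ 2 + 2 * (γ₁ + 2 * γ₁ ^ 2) * D) / (γ₁ * ((k : ℝ) + 1)) := by
  obtain ⟨hmem, havg⟩ := hit.map_average_le hs.convexOn_φ
    (fun i => (hs.isMaxOn_u _ (hit.γ_succ_pos hγ₁ i) _).1) hγ₁ hū k
  refine ⟨hmem, ?_⟩
  have hk : (0 : ℝ) < k + 1 := by positivity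
  rw [le_div_iff₀ hk] at havg
  have h := mul_le_mul_of_nonneg_left (havg.trans (hit.sum_primal_le hs hA hγ₁ hlow k)) hγ₁.le
  field_simp at h
  -- the argument gives the sharper bound `(γ₁² D + ‖A‖² ‖x 0‖² / 2) / (γ₁ (k + 1))`
  rw [le_div_iff₀ (by positivity)]
  nlinarith

end IsAcceleratedIterate

end AcceleratedMethod

section ExtendedSmoothing

variable {E F : Type*} [NormedAddCommGroup E] [InnerProductSpace ℝ E]
  [NormedAddCommGroup F] [InnerProductSpace ℝ F] {A : E →L[ℝ] F} {U : Set E} {φ : E → EReal} {c : E}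

theorem isMaxOn_smoothedLagrangian_toReal (hbot : ∀ v, φ v ≠ ⊥) {γ : ℝ} {y : F} {u : E}
    (hfin : φ u ≠ ⊤)
    (hmax : ∀ v ∈ U, ((⟪y, A v⟫ : ℝ) : EReal) - φ v - ((γ * (1 / 2 * ‖v - c‖ ^ 2) : ℝ) : EReal)
      ≤ ((⟪y, A u⟫ : ℝ) : EReal) - φ u - ((γ * (1 / 2 * ‖u - c‖ ^ 2) : ℝ) : EReal)) :
    IsMaxOn (smoothedLagrangian A (fun v => (φ v).toReal) c γ y) {v | v ∈ U ∧ φ v ≠ ⊤} u := by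
  refine isMaxOn_iff.2 fun v hv => ?_
  have h := hmax v hv.1
  rwa [← EReal.coe_toReal hv.2 (hbot v), ← EReal.coe_toReal hfin (hbot u), ← EReal.coe_sub,
    ← EReal.coe_sub, ← EReal.coe_sub, ← EReal.coe_sub, EReal.coe_le_coe_iff] at h

theorem sub_mul_le_smoothedLagrangian_add (hbot : ∀ v, φ v ≠ ⊥) {D γ : ℝ} (hγ : 0 ≤ γ)
    (hD : ∀ v ∈ U, φ v ≠ ⊤ → 1 / 2 * ‖v - c‖ ^ 2 ≤ D) {y : F} {u : E}
    (hmax : IsMaxOn (smoothedLagrangian A (fun v => (φ v).toReal) c γ y) {v | v ∈ U ∧ φ v ≠ ⊤} u)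
    {a : ℝ} {e : EReal} (he : e ≠ ⊤) (he' : e ≠ ⊥)
    (h : (a : EReal) ≤ (⨆ v ∈ U, (((⟪y, A v⟫ : ℝ) : EReal) - φ v)) + e) :
    a - γ * D ≤ smoothedLagrangian A (fun v => (φ v).toReal) c γ y u + e.toReal := by
  have hsup : (⨆ v ∈ U, (((⟪y, A v⟫ : ℝ) : EReal) - φ v))
      ≤ ((smoothedLagrangian A (fun v => (φ v).toReal) c γ y u + γ * D : ℝ) : EReal) := by
    refine iSup₂_le fun v hv => ?_
    by_cases htop : φ v = ⊤
    · simp [htop]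
    rw [← EReal.coe_toReal htop (hbot v), ← EReal.coe_sub, EReal.coe_le_coe_iff]
    have hle := isMaxOn_iff.1 hmax v ⟨hv, htop⟩
    have hDv := mul_le_mul_of_nonneg_left (hD v hv htop) hγ
    simp only [smoothedLagrangian] at hle ⊢
    linarith
  rw [← EReal.coe_toReal he he'] at h
  have h' := h.trans (add_le_add hsup le_rfl)
  rw [← EReal.coe_add, EReal.coe_le_coe_iff] at h'
  linarith

end ExtendedSmoothing

section SupportFunction

variable {F : Type*} [NormedAddCommGroup F] [InnerProductSpace ℝ F] {K : Set F} {b : F}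

noncomputable def shiftedSupport (K : Set F) (b x : F) : EReal :=
  (⨆ r ∈ K, ((⟪x, r⟫ : ℝ) : EReal)) - ((⟪b, x⟫ : ℝ) : EReal)

theorem shiftedSupport_le_coe_iff {y : F} {d : ℝ} :
    shiftedSupport K b y ≤ d ↔ ∀ r ∈ K, ⟪y, r⟫ - ⟪b, y⟫ ≤ d := by
  rw [shiftedSupport, EReal.sub_le_iff_le_add (.inl (EReal.coe_ne_bot _))
    (.inl (EReal.coe_ne_top _)), ← EReal.coe_add, iSup₂_le_iff]
  simp only [EReal.coe_le_coe_iff, sub_le_iff_le_add]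

theorem coe_le_shiftedSupport {y r : F} (hr : r ∈ K) :
    ((⟪y, r⟫ - ⟪b, y⟫ : ℝ) : EReal) ≤ shiftedSupport K b y := by
  rw [shiftedSupport, EReal.coe_sub]
  exact EReal.sub_le_sub (le_iSup₂ (f := fun r (_ : r ∈ K) => ((⟪y, r⟫ : ℝ) : EReal)) r hr) le_rfl

theorem shiftedSupport_ne_bot (hK : K.Nonempty) (y : F) : shiftedSupport K b y ≠ ⊥ :=
  ne_bot_of_le_ne_bot (EReal.coe_ne_bot _) (coe_le_shiftedSupport hK.some_mem)

theorem shiftedSupport_zero (hK : K.Nonempty) : shiftedSupport K b 0 = 0 := by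
  simp [shiftedSupport, biSup_const hK]

theorem convexOn_toReal_shiftedSupport (hK : K.Nonempty) :
    ConvexOn ℝ {y | shiftedSupport K b y ≠ ⊤} fun y => (shiftedSupport K b y).toReal := by
  simpa using convexOn_toReal_of_le convex_univ (shiftedSupport_ne_bot hK)
    fun y _ z _ hy hz a c ha hc _ => shiftedSupport_le_coe_iff.2 fun r hr => by
      have hyr := shiftedSupport_le_coe_iff.1 (EReal.le_coe_toReal hy) r hr
      have hzr := shiftedSupport_le_coe_iff.1 (EReal.le_coe_toReal hz) r hr
      simp only [inner_add_left, inner_add_right, real_inner_smul_left, real_inner_smul_right]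
      nlinarith [mul_le_mul_of_nonneg_left hyr ha, mul_le_mul_of_nonneg_left hzr hc]

end SupportFunction

section ExtendedSetup

variable {E F : Type*} [NormedAddCommGroup E] [InnerProductSpace ℝ E]
  [NormedAddCommGroup F] [InnerProductSpace ℝ F] {A : E →L[ℝ] F}

theorem IsSmoothedProxSetup.of_extended {U : Set E} (hU : Convex ℝ U) {φ : E → EReal}
    (hbot : ∀ v, φ v ≠ ⊥)
    (hcx : ∀ v w : E, ∀ a b : ℝ, 0 ≤ a → 0 ≤ b → a + b = 1 →
      φ (a • v + b • w) ≤ (a : EReal) * φ v + (b : EReal) * φ w)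
    {c : E} {u : ℝ → F → E} (hmem : ∀ γ > 0, ∀ y, u γ y ∈ U) (hfin : ∀ γ > 0, ∀ y, φ (u γ y) ≠ ⊤)
    (hmax : ∀ γ > 0, ∀ y, ∀ v ∈ U,
      ((⟪y, A v⟫ : ℝ) : EReal) - φ v - ((γ * (1 / 2 * ‖v - c‖ ^ 2) : ℝ) : EReal)
        ≤ ((⟪y, A (u γ y)⟫ : ℝ) : EReal) - φ (u γ y)
          - ((γ * (1 / 2 * ‖u γ y - c‖ ^ 2) : ℝ) : EReal))
    {K : Set F} (hK : K.Nonempty) {b : F} {prox : ℝ → F → F}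
    (hprox : ∀ β > 0, ∀ w z,
      shiftedSupport K b (prox β w) + (((2 * β)⁻¹ * ‖prox β w - w‖ ^ 2 : ℝ) : EReal)
        ≤ shiftedSupport K b z + (((2 * β)⁻¹ * ‖z - w‖ ^ 2 : ℝ) : EReal)) :
    IsSmoothedProxSetup A (fun v => (φ v).toReal) c {v | v ∈ U ∧ φ v ≠ ⊤} u
      (fun y => (shiftedSupport K b y).toReal) {y | shiftedSupport K b y ≠ ⊤} prox where
  convexOn_φ := convexOn_toReal_of_le_mul_add hU hbot hcx
  isMaxOn_u γ hγ y := ⟨⟨hmem γ hγ y, hfin γ hγ y⟩,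
    isMaxOn_smoothedLagrangian_toReal hbot (hfin γ hγ y) (hmax γ hγ y)⟩
  convexOn_g := convexOn_toReal_shiftedSupport hK
  zero_mem := by simp [shiftedSupport_zero hK]
  g_zero := by simp [shiftedSupport_zero hK]
  isMinOn_prox β hβ w := isMinOn_toReal_add_of_forall_le (shiftedSupport_ne_bot hK)
    ⟨0, by simp [shiftedSupport_zero hK]⟩ (hprox β hβ w)

theorem neg_mul_infDist_le_of_saddle {K : Set F} (hK : K.Nonempty) {b xs : F} {U : Set E}
    {φ : E → EReal} {φ₀ : ℝ} {v : E} (hv : v ∈ U) (hfin : φ v ≠ ⊤) (hbot : φ v ≠ ⊥)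
    (hsaddle : ∀ v ∈ U, ∀ r ∈ K, ((φ₀ + ⟪xs, A v - b + r⟫ : ℝ) : EReal) ≤ φ v) :
    -(‖xs‖ * Metric.infDist (b - A v) K) ≤ (φ v).toReal - φ₀ := by
  have h := sub_le_mul_infDist_of_forall_inner hK fun r hr => by
    have h := hsaddle v hv r hr
    rw [← EReal.coe_toReal hfin hbot, EReal.coe_le_coe_iff] at h
    rwa [show A v - b + r = r - (b - A v) by abel] at h
  linarith

end ExtendedSetup

theorem stmt_18_general
    {n p : ℕ}
    (U : Set (EuclideanSpace ℝ (Fin n)))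
    (hUcx : Convex ℝ U)
    (φ : EuclideanSpace ℝ (Fin n) → EReal)
    (hφbot : ∀ v, φ v ≠ ⊥)
    (hφcx : ∀ v w : EuclideanSpace ℝ (Fin n), ∀ a c : ℝ, 0 ≤ a → 0 ≤ c → a + c = 1 →
      φ (a • v + c • w) ≤ (a : EReal) * φ v + (c : EReal) * φ w)
    (A : EuclideanSpace ℝ (Fin n) →L[ℝ] EuclideanSpace ℝ (Fin p))
    (hAnorm : 0 < ‖A‖)
    (bvec : EuclideanSpace ℝ (Fin p))
    (K : Set (EuclideanSpace ℝ (Fin p)))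
    (hKne : K.Nonempty)
    (φstar : ℝ)
    (uc : EuclideanSpace ℝ (Fin n))
    (DU : ℝ)
    (hDUbdd : BddAbove ((fun v => (1/2) * ‖v - uc‖^2) '' {v | v ∈ U ∧ φ v ≠ ⊤}))
    (hDU : DU = sSup ((fun v => (1/2) * ‖v - uc‖^2) '' {v | v ∈ U ∧ φ v ≠ ⊤}))
    (ustar : ℝ → EuclideanSpace ℝ (Fin p) → EuclideanSpace ℝ (Fin n))
    (humem : ∀ γ > (0:ℝ), ∀ x, ustar γ x ∈ U)
    (hufin : ∀ γ > (0:ℝ), ∀ x, φ (ustar γ x) ≠ ⊤)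
    (humax : ∀ γ > (0:ℝ), ∀ x, ∀ v ∈ U,
      (⟪x, A v⟫ : EReal) - φ v - ((γ * ((1/2) * ‖v - uc‖^2) : ℝ) : EReal)
        ≤ (⟪x, A (ustar γ x)⟫ : EReal) - φ (ustar γ x)
          - ((γ * ((1/2) * ‖ustar γ x - uc‖^2) : ℝ) : EReal))
    (g : EuclideanSpace ℝ (Fin p) → EReal)
    (hg : ∀ x, g x = (⨆ r ∈ K, (⟪x, r⟫ : EReal)) - ((⟪bvec, x⟫ : ℝ) : EReal))
    (F : EuclideanSpace ℝ (Fin p) → EReal)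
    (hF : ∀ x, F x = (⨆ v ∈ U, ((⟪x, A v⟫ : EReal) - φ v)) + g x)
    (prox : ℝ → EuclideanSpace ℝ (Fin p) → EuclideanSpace ℝ (Fin p))
    (hprox : ∀ β > (0:ℝ), ∀ x y,
      g (prox β x) + (((2*β)⁻¹ * ‖prox β x - x‖^2 : ℝ) : EReal)
        ≤ g y + (((2*β)⁻¹ * ‖y - x‖^2 : ℝ) : EReal))
    (γ1 : ℝ) (hγ1 : 0 < γ1)
    (τ : ℕ → ℝ) (hτ : ∀ k : ℕ, τ k = 1/((k:ℝ) + 1))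
    (γs : ℕ → ℝ) (hγs : ∀ k : ℕ, γs (k+1) = γ1 / ((k:ℝ) + 1))
    (x xt xh : ℕ → EuclideanSpace ℝ (Fin p))
    (hxt0 : xt 0 = x 0)
    (hxh : ∀ k : ℕ, xh k = (1 - τ k) • x k + τ k • xt k)
    (hxrec : ∀ k : ℕ, x (k+1)
        = prox (γs (k+1)/‖A‖^2) (xh k - (γs (k+1)/‖A‖^2) • A (ustar (γs (k+1)) (xh k))))
    (hxtrec : ∀ k : ℕ, xt (k+1) = xt k - (τ k)⁻¹ • (xh k - x (k+1)))
    (ubar : ℕ → EuclideanSpace ℝ (Fin n))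
    (hubar : ∀ k : ℕ, ubar k = (γ1 * ((k:ℝ) + 1))⁻¹ •
        ∑ i ∈ Finset.range (k+1), (γs (i+1) / τ i) • ustar (γs (i+1)) (xh i))
    (xs : EuclideanSpace ℝ (Fin p))
    (hxsmin : ∀ y, F xs ≤ F y) (hFs : F xs = ((-φstar : ℝ) : EReal))
    (hsaddle : ∀ v ∈ U, ∀ r ∈ K,
      ((φstar + ⟪xs, A v - bvec + r⟫ : ℝ) : EReal) ≤ φ v)
    :
    ∀ k : ℕ,
      ubar k ∈ U ∧
      ((-(‖xs‖ * Metric.infDist (bvec - A (ubar k)) K) : ℝ) : EReal)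
          ≤ φ (ubar k) - (φstar : EReal) ∧
      φ (ubar k) - (φstar : EReal)
          ≤ (((‖A‖^2 * ‖x 0‖^2 + 2*(γ1 + 2*γ1^2)*DU) / (γ1 * ((k:ℝ) + 1)) : ℝ) : EReal) := by
  obtain rfl : g = shiftedSupport K bvec := funext hg
  have hs := IsSmoothedProxSetup.of_extended hUcx hφbot hφcx humem hufin humax hKne hprox
  have hD : ∀ v ∈ U, φ v ≠ ⊤ → 1 / 2 * ‖v - uc‖ ^ 2 ≤ DU :=
    fun v hv hfin => hDU ▸ le_csSup hDUbdd ⟨v, ⟨hv, hfin⟩, rfl⟩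
  have hDU0 : 0 ≤ DU := (by positivity : (0 : ℝ) ≤ 1 / 2 * ‖ustar γ1 0 - uc‖ ^ 2).trans
    (hD _ (humem γ1 hγ1 0) (hufin γ1 hγ1 0))
  have hlow : ∀ γ > 0, ∀ y ∈ {y | shiftedSupport K bvec y ≠ ⊤}, -φstar - γ * DU
      ≤ smoothedLagrangian A (fun v => (φ v).toReal) uc γ y (ustar γ y)
        + (shiftedSupport K bvec y).toReal := fun γ hγ y hy =>
    sub_mul_le_smoothedLagrangian_add hφbot hγ.le hD (hs.isMaxOn_u γ hγ y).2 hy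
      (shiftedSupport_ne_bot hKne y) ((hFs.symm.trans_le (hxsmin y)).trans_eq (hF y))
  have hit : IsAcceleratedIterate A ustar prox γ1 τ γs x xt xh :=
    ⟨hτ, hγs, hxt0, hxh, hxrec, hxtrec⟩
  intro k
  obtain ⟨hmem, hgap⟩ := hit.primal_gap_le hs hAnorm hγ1 hlow hDU0 hubar k
  rw [← EReal.coe_toReal hmem.2 (hφbot _), ← EReal.coe_sub, EReal.coe_le_coe_iff,
    EReal.coe_le_coe_iff]
  exact ⟨hmem.1, neg_mul_infDist_le_of_saddle hKne hmem.1 hmem.2 (hφbot _) hsaddle, hgap⟩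

theorem stmt_18
    {n p : ℕ} (hn : 1 ≤ n) (hp : 1 ≤ p)
    (U : Set (EuclideanSpace ℝ (Fin n)))
    (hUne : U.Nonempty) (hUcl : IsClosed U) (hUcx : Convex ℝ U)
    (φ : EuclideanSpace ℝ (Fin n) → EReal)
    (hφbot : ∀ v, φ v ≠ ⊥)
    (hφlsc : LowerSemicontinuous φ)
    (hφcx : ∀ v w : EuclideanSpace ℝ (Fin n), ∀ a c : ℝ, 0 ≤ a → 0 ≤ c → a + c = 1 →
      φ (a • v + c • w) ≤ (a : EReal) * φ v + (c : EReal) * φ w)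
    (hφdom : ∃ v ∈ U, φ v ≠ ⊤)
    (A : EuclideanSpace ℝ (Fin n) →L[ℝ] EuclideanSpace ℝ (Fin p))
    (hAnorm : 0 < ‖A‖)
    (bvec : EuclideanSpace ℝ (Fin p))
    (K : Set (EuclideanSpace ℝ (Fin p)))
    (hKne : K.Nonempty) (hKcl : IsClosed K) (hKcx : Convex ℝ K)
    (φstar : ℝ) (upr : EuclideanSpace ℝ (Fin n))
    (huprU : upr ∈ U) (huprfeas : A upr - bvec ∈ -K) (huprval : φ upr = (φstar : EReal))
    (hprmin : ∀ v ∈ U, A v - bvec ∈ -K → (φstar : EReal) ≤ φ v)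
    (uc : EuclideanSpace ℝ (Fin n)) (hucU : uc ∈ U)
    (DU : ℝ)
    (hDUbdd : BddAbove ((fun v => (1/2) * ‖v - uc‖^2) '' {v | v ∈ U ∧ φ v ≠ ⊤}))
    (hDU : DU = sSup ((fun v => (1/2) * ‖v - uc‖^2) '' {v | v ∈ U ∧ φ v ≠ ⊤}))
    (ustar : ℝ → EuclideanSpace ℝ (Fin p) → EuclideanSpace ℝ (Fin n))
    (humem : ∀ γ > (0:ℝ), ∀ x, ustar γ x ∈ U)
    (hufin : ∀ γ > (0:ℝ), ∀ x, φ (ustar γ x) ≠ ⊤)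
    (humax : ∀ γ > (0:ℝ), ∀ x, ∀ v ∈ U,
      (⟪x, A v⟫ : EReal) - φ v - ((γ * ((1/2) * ‖v - uc‖^2) : ℝ) : EReal)
        ≤ (⟪x, A (ustar γ x)⟫ : EReal) - φ (ustar γ x)
          - ((γ * ((1/2) * ‖ustar γ x - uc‖^2) : ℝ) : EReal))
    (g : EuclideanSpace ℝ (Fin p) → EReal)
    (hg : ∀ x, g x = (⨆ r ∈ K, (⟪x, r⟫ : EReal)) - ((⟪bvec, x⟫ : ℝ) : EReal))
    (F : EuclideanSpace ℝ (Fin p) → EReal)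
    (hF : ∀ x, F x = (⨆ v ∈ U, ((⟪x, A v⟫ : EReal) - φ v)) + g x)
    (prox : ℝ → EuclideanSpace ℝ (Fin p) → EuclideanSpace ℝ (Fin p))
    (hprox : ∀ β > (0:ℝ), ∀ x y,
      g (prox β x) + (((2*β)⁻¹ * ‖prox β x - x‖^2 : ℝ) : EReal)
        ≤ g y + (((2*β)⁻¹ * ‖y - x‖^2 : ℝ) : EReal))
    (hproxu : ∀ β > (0:ℝ), ∀ x y,
      (∀ w, g y + (((2*β)⁻¹ * ‖y - x‖^2 : ℝ) : EReal)
          ≤ g w + (((2*β)⁻¹ * ‖w - x‖^2 : ℝ) : EReal)) → y = prox β x)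
    (γ1 : ℝ) (hγ1 : 0 < γ1)
    (τ : ℕ → ℝ) (hτ : ∀ k : ℕ, τ k = 1/((k:ℝ) + 1))
    (γs : ℕ → ℝ) (hγs : ∀ k : ℕ, γs (k+1) = γ1 / ((k:ℝ) + 1))
    (x xt xh : ℕ → EuclideanSpace ℝ (Fin p))
    (hxt0 : xt 0 = x 0) (hx0dom : F (x 0) ≠ ⊤)
    (hxh : ∀ k : ℕ, xh k = (1 - τ k) • x k + τ k • xt k)
    (hxrec : ∀ k : ℕ, x (k+1)
        = prox (γs (k+1)/‖A‖^2) (xh k - (γs (k+1)/‖A‖^2) • A (ustar (γs (k+1)) (xh k))))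
    (hxtrec : ∀ k : ℕ, xt (k+1) = xt k - (τ k)⁻¹ • (xh k - x (k+1)))
    (ubar : ℕ → EuclideanSpace ℝ (Fin n))
    (hubar : ∀ k : ℕ, ubar k = (γ1 * ((k:ℝ) + 1))⁻¹ •
        ∑ i ∈ Finset.range (k+1), (γs (i+1) / τ i) • ustar (γs (i+1)) (xh i))
    (xs : EuclideanSpace ℝ (Fin p))
    (hxsmin : ∀ y, F xs ≤ F y) (hFs : F xs = ((-φstar : ℝ) : EReal))
    (hsaddle : ∀ v ∈ U, ∀ r ∈ K,
      ((φstar + ⟪xs, A v - bvec + r⟫ : ℝ) : EReal) ≤ φ v)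
    :
    ∀ k : ℕ,
      ubar k ∈ U ∧
      ((-(‖xs‖ * Metric.infDist (bvec - A (ubar k)) K) : ℝ) : EReal)
          ≤ φ (ubar k) - (φstar : EReal) ∧
      φ (ubar k) - (φstar : EReal)
          ≤ (((‖A‖^2 * ‖x 0‖^2 + 2*(γ1 + 2*γ1^2)*DU) / (γ1 * ((k:ℝ) + 1)) : ℝ) : EReal) :=
  stmt_18_general U hUcx φ hφbot hφcx A hAnorm bvec K hKne φstar uc DU hDUbdd hDU ustar humem hufin
    humax g hg F hF prox hprox γ1 hγ1 τ hτ γs hγs x xt xh hxt0 hxh hxrec hxtrec ubar hubar xs hxsmin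
    hFs hsaddle
end
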